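/- arXiv:1403.0303 — 15 statements merged into one kernel-verified Lean document; each statement's English description precedes it below -/
import Mathlib

section
/- The number of m/n-parking functions equals m^(n-1), where an m/n-parking function is a function f from {1,...,n} to the nonnegative integers such that for every positive integer ℓ ≤ m, the number of indices k with f(k) < ℓ is at least ℓn/m. Here m and n are coprime positive integers. -/
/-!
Adding a constant to every value is a free action of `ZMod m` on `(ZMod m)ⁿ`, and each orbit
contains exactly one parking function, whence `m · #PF = mⁿ` (a cycle lemma). For
`g : Fin n → ZMod m` consider the `m`-periodic walk `a ↦ ∑_{i<a} (m · #g⁻¹(i) - n)`: the shift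
`g - c` is a parking function exactly when `c` minimises the walk, and since the walk at `a` is
`≡ -a n (mod m)`, by coprimality it takes distinct values on a period, so the minimiser is unique.
-/

/-- An `m/n`-parking function: `f : {1,…,n} → ℤ≥0` such that for every positive
integer `ℓ ≤ m`, the number of indices `k` with `f k < ℓ` is at least `ℓ·n/m`. -/
def IsParkingFn (m n : ℕ) (f : Fin n → ℕ) : Prop :=
  ∀ ℓ : ℕ, 0 < ℓ → ℓ ≤ m → ℓ * n ≤ m * {k : Fin n | f k < ℓ}.ncard

open Finset

theorem IsParkingFn.apply_lt {m n : ℕ} [NeZero m] {f : Fin n → ℕ} (hf : IsParkingFn m n f)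
    (k : Fin n) : f k < m := by
  have hle : n ≤ {j | f j < m}.ncard :=
    Nat.le_of_mul_le_mul_left (by simpa [mul_comm] using hf m (NeZero.pos m) le_rfl)
      (NeZero.pos m)
  by_contra hk
  have := Set.ncard_lt_card ((Set.ne_univ_iff_exists_notMem {j | f j < m}).2 ⟨k, hk⟩)
  rw [Nat.card_eq_fintype_card, Fintype.card_fin] at this
  omega

def IsParkingFn.equivZMod (m n : ℕ) [NeZero m] :
    {f : Fin n → ℕ // IsParkingFn m n f} ≃
      {g : Fin n → ZMod m // IsParkingFn m n fun k => (g k).val} where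
  toFun f := ⟨fun k => f.1 k, by simpa [ZMod.val_natCast_of_lt (f.2.apply_lt _)] using f.2⟩
  invFun g := ⟨fun k => (g.1 k).val, g.2⟩
  left_inv f := Subtype.ext <| funext fun k => ZMod.val_natCast_of_lt (f.2.apply_lt k)
  right_inv g := Subtype.ext <| funext fun k => ZMod.natCast_zmod_val (g.1 k)

namespace RationalParking

variable {m n : ℕ} (g : Fin n → ZMod m)

def fiberCount (i : ℕ) : ℕ := #{k | g k = i}

def walk (a : ℕ) : ℤ := ∑ i ∈ range a, ((m : ℤ) * fiberCount g i - n)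

lemma fiberCount_periodic : Function.Periodic (fiberCount g) m := by
  intro i
  simp [fiberCount]

lemma walk_cast (a : ℕ) : (walk g a : ZMod m) = -(a * n) := by
  simp [walk]

lemma natCast_eq_of_walk_eq (hcop : Nat.Coprime m n) {a b : ℕ} (h : walk g a = walk g b) :
    (a : ZMod m) = b := by
  have hn : IsUnit (n : ZMod m) := (ZMod.isUnit_iff_coprime n m).2 hcop.symm
  have := congrArg (fun x : ℤ => (x : ZMod m)) h
  simp only [walk_cast, neg_inj] at this
  exact hn.mul_right_cancel this

variable [NeZero m]

lemma ncard_sub_val_lt (c : ZMod m) {ℓ : ℕ} (hℓ : ℓ ≤ m) :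
    {k | (g k - c).val < ℓ}.ncard = ∑ i ∈ range ℓ, fiberCount g (c.val + i) := by
  have hfiber : ∀ i < ℓ, ∀ k, (g k - c).val = i ↔ g k = ((c.val + i : ℕ) : ZMod m) := by
    intro i hi k
    rw [Nat.cast_add, ZMod.natCast_zmod_val, ← sub_eq_iff_eq_add',
      ← (ZMod.val_injective m).eq_iff, ZMod.val_natCast_of_lt (hi.trans_le hℓ)]
  rw [Set.ncard_eq_toFinset_card', Set.toFinset_ofPred,
    card_eq_sum_card_fiberwise (f := fun k => (g k - c).val) (t := range ℓ)
      (fun k hk => by simpa using hk)]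
  refine sum_congr rfl fun i hi => ?_
  have hi : i < ℓ := mem_range.1 hi
  simp only [fiberCount, filter_filter]
  refine congrArg card (filter_congr fun k _ => ?_)
  rw [← hfiber i hi k]
  exact and_iff_right_of_imp fun h => h ▸ hi

lemma walk_add_sub_walk (c : ZMod m) {ℓ : ℕ} (hℓ : ℓ ≤ m) :
    walk g (c.val + ℓ) - walk g c.val = m * {k | (g k - c).val < ℓ}.ncard - ℓ * n := by
  rw [ncard_sub_val_lt g c hℓ, walk, walk, sum_range_add, add_sub_cancel_left, sum_sub_distrib,
    ← mul_sum]
  simp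

lemma walk_period : walk g m = 0 := by
  have h := walk_add_sub_walk g 0 le_rfl
  have hall : {k | (g k - 0).val < m} = Set.univ := Set.eq_univ_of_forall fun k => ZMod.val_lt _
  rw [hall, Set.ncard_univ, Nat.card_eq_fintype_card, Fintype.card_fin] at h
  simpa [walk] using h

lemma walk_periodic : Function.Periodic (walk g) m := by
  intro a
  rw [walk, add_comm, sum_range_add, ← walk, walk_period, zero_add, walk]
  refine sum_congr rfl fun i _ => ?_
  rw [add_comm, fiberCount_periodic]

lemma isParkingFn_sub_iff (c : ZMod m) :
    IsParkingFn m n (fun k => (g k - c).val) ↔ ∀ a, walk g c.val ≤ walk g a := by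
  constructor
  · intro hpark a
    set ℓ := ((a : ZMod m) - c).val
    have hℓ : walk g (c.val + ℓ) = walk g a := by
      rw [← (walk_periodic g).map_mod_nat, ← (walk_periodic g).map_mod_nat a,
        ← ZMod.val_natCast, ← ZMod.val_natCast]
      simp [ℓ]
    have hℓm : ℓ ≤ m := (ZMod.val_lt _).le
    rw [← hℓ]
    rcases Nat.eq_zero_or_pos ℓ with h0 | hpos
    · rw [h0, add_zero]
    · have hcount : (ℓ * n : ℤ) ≤ m * {k | (g k - c).val < ℓ}.ncard := by
        exact_mod_cast hpark ℓ hpos hℓm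
      linarith [walk_add_sub_walk g c hℓm]
  · intro hmin ℓ _ hℓm
    have : (ℓ * n : ℤ) ≤ m * {k | (g k - c).val < ℓ}.ncard := by
      linarith [walk_add_sub_walk g c hℓm, hmin (c.val + ℓ)]
    exact_mod_cast this

lemma existsUnique_isParkingFn_sub (hcop : Nat.Coprime m n) :
    ∃! c : ZMod m, IsParkingFn m n (fun k => (g k - c).val) := by
  simp only [isParkingFn_sub_iff]
  obtain ⟨c, hc⟩ := Finite.exists_min (fun c : ZMod m => walk g c.val)
  refine ⟨c, fun a => ?_, fun c' hc' => ?_⟩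
  · rw [← (walk_periodic g).map_mod_nat a, ← ZMod.val_natCast]
    exact hc a
  · have := natCast_eq_of_walk_eq g hcop (le_antisymm (hc' c.val) (hc c'))
    simpa [ZMod.natCast_zmod_val] using this

lemma bijective_add_const (hcop : Nat.Coprime m n) :
    Function.Bijective fun p : {g : Fin n → ZMod m // IsParkingFn m n fun k => (g k).val} ×
      ZMod m => fun k => p.1.1 k + p.2 := by
  constructor
  · rintro ⟨⟨g, hg⟩, c⟩ ⟨⟨g', hg'⟩, c'⟩ h
    have h : ∀ k, g k + c = g' k + c' := congrFun h
    have hg : IsParkingFn m n fun k => (g' k + c' - c).val := by simpa [← h] using hg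
    have hg' : IsParkingFn m n fun k => (g' k + c' - c').val := by simpa using hg'
    obtain rfl : c = c' := (existsUnique_isParkingFn_sub _ hcop).unique hg hg'
    obtain rfl : g = g' := funext fun k => add_right_cancel (h k)
    rfl
  · intro h
    obtain ⟨c, hc, -⟩ := existsUnique_isParkingFn_sub h hcop
    exact ⟨(⟨fun k => h k - c, hc⟩, c), by simp⟩

end RationalParking

/-- The number of `m/n`-parking functions equals `m^(n-1)` for coprime `m`, `n`. -/
theorem stmt_0 (m n : ℕ) (hm : 0 < m) (hn : 0 < n) (hcop : Nat.Coprime m n) :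
    Nat.card {f : Fin n → ℕ // IsParkingFn m n f} = m ^ (n - 1) := by
  have : NeZero m := ⟨hm.ne'⟩
  have hcard := Nat.card_congr <| ((IsParkingFn.equivZMod m n).prodCongr (Equiv.refl _)).trans
    (Equiv.ofBijective _ (RationalParking.bijective_add_const hcop))
  have hpow : m ^ n = m ^ (n - 1) * m := by rw [← pow_succ, Nat.sub_add_cancel hn]
  rw [Nat.card_prod, Nat.card_fun, Nat.card_zmod, Nat.card_fin, hpow] at hcard
  exact Nat.eq_of_mul_eq_mul_right hm hcard
end

section
/- The number of nondecreasing m/n-parking functions equals the rational Catalan number (1/(m+n)) * binomial(m+n, n), for m, n coprime. -/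
open Finset Function

section Monotone

variable {n : ℕ} {f : Fin n → ℕ}

theorem Monotone.lt_card_filter_lt_iff (hf : Monotone f) (i : Fin n) (ℓ : ℕ) :
    i.val < #{k | f k < ℓ} ↔ f i < ℓ := by
  constructor
  · intro hi
    by_contra! hℓ
    have hsub : ({k | f k < ℓ} : Finset (Fin n)) ⊆ Iio i := fun k hk => by
      simp only [mem_filter, mem_univ, true_and, mem_Iio] at hk ⊢
      by_contra! hik
      exact (hℓ.trans (hf hik)).not_gt hk
    have := card_le_card hsub
    rw [Fin.card_Iio] at this
    omega
  · intro hi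
    have hsub : Iic i ⊆ ({k | f k < ℓ} : Finset (Fin n)) := fun k hk => by
      simp only [mem_filter, mem_univ, true_and, mem_Iic] at hk ⊢
      exact (hf hk).trans_lt hi
    have := card_le_card hsub
    rw [Fin.card_Iic] at this
    omega

theorem Monotone.forall_mul_le_mul_card_filter_lt_iff (hf : Monotone f) {M : ℕ} (hM : 0 < M) :
    (∀ ℓ ≤ M, n * ℓ ≤ M * #{k | f k < ℓ}) ↔ ∀ i, n * f i ≤ M * i := by
  constructor
  · intro h i
    have hfi : f i < M := by
      have : n ≤ #{k | f k < M} := le_of_mul_le_mul_left (by linarith [h M le_rfl]) hM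
      exact (hf.lt_card_filter_lt_iff i M).1 (by omega)
    have hcard : #{k | f k < f i} ≤ i :=
      not_lt.1 fun hi => (hf.lt_card_filter_lt_iff i _).1 hi |>.false
    calc n * f i ≤ M * #{k | f k < f i} := h _ hfi.le
      _ ≤ M * i := Nat.mul_le_mul_left _ hcard
  · intro h ℓ hℓM
    rcases (card_filter_le univ (f · < ℓ)).trans_eq (card_fin n) |>.lt_or_eq with hc | hc
    · set i : Fin n := ⟨_, hc⟩
      have hℓ : ℓ ≤ f i := not_lt.1 fun hi => ((hf.lt_card_filter_lt_iff i ℓ).2 hi).false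
      calc n * ℓ ≤ n * f i := Nat.mul_le_mul_left _ hℓ
        _ ≤ M * i := h i
    · rw [hc, mul_comm]
      exact Nat.mul_le_mul_right _ hℓM

theorem isParkingFn_iff_forall_mul_le (hf : Monotone f) {m : ℕ} (hm : 0 < m) :
    IsParkingFn m n f ↔ ∀ i, n * f i ≤ m * i := by
  rw [← hf.forall_mul_le_mul_card_filter_lt_iff hm]
  refine forall_congr' fun ℓ => ?_
  rcases ℓ.eq_zero_or_pos with rfl | hℓ
  · simp
  · simp [hℓ, mul_comm ℓ, Set.ncard_eq_toFinset_card']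

end Monotone

theorem Fin.add_sub_le_of_strictMono {n : ℕ} {φ : Fin n → ℕ} (hφ : StrictMono φ) {i j : Fin n}
    (hij : i ≤ j) : φ i + (j - i) ≤ φ j := by
  have := card_le_card_of_injOn φ (s := Icc i j) (t := Icc (φ i) (φ j))
    (fun k hk => by
      simp only [coe_Icc, Set.mem_Icc] at hk ⊢
      exact ⟨hφ.monotone hk.1, hφ.monotone hk.2⟩) hφ.injective.injOn
  simp only [Fin.card_Icc, Nat.card_Icc] at this
  omega

theorem Fin.val_le_of_strictMono {n : ℕ} {φ : Fin n → ℕ} (hφ : StrictMono φ) (i : Fin n) :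
    i.val ≤ φ i := by
  have := Fin.add_sub_le_of_strictMono hφ (i := ⟨0, i.pos⟩) (j := i) (Nat.zero_le _)
  rw [Nat.sub_zero] at this
  omega

def staircaseEquiv (m n : ℕ) :
    {f : Fin n → ℕ // Monotone f ∧ ∀ i, n * f i ≤ m * i} ≃
      {g : Fin n ↪o Fin (m + n) // ∀ i, n * (g i).val ≤ (m + n) * i} where
  toFun := fun ⟨f, hf, hfm⟩ => ⟨OrderEmbedding.ofStrictMono
      (fun i => ⟨f i + i, by nlinarith [hfm i, i.isLt]⟩)
      fun i j hij => Fin.mk_lt_mk.2 (by linarith [hf hij.le, Fin.lt_def.1 hij]),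
    fun i => show n * (f i + i) ≤ (m + n) * i by nlinarith [hfm i]⟩
  invFun := fun ⟨g, hg⟩ =>
    have hφ : StrictMono fun i => (g i).val := g.strictMono
    ⟨fun i => g i - i,
      fun i j hij => show (g i).val - i ≤ (g j).val - j by
        have := Fin.add_sub_le_of_strictMono hφ hij
        have := Fin.le_def.1 hij
        have := Fin.val_le_of_strictMono hφ i
        omega,
      fun i => by
        have := hg i
        have := Fin.val_le_of_strictMono hφ i
        zify [this] at *
        nlinarith⟩
  left_inv := fun ⟨f, hf, hfm⟩ => by ext i; exact Nat.add_sub_cancel ..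
  right_inv := fun ⟨g, hg⟩ => by
    ext i
    exact Nat.sub_add_cancel (Fin.val_le_of_strictMono g.strictMono i)

theorem Function.Periodic.forall_le_iff_forall_le_add {α : Type*} [Preorder α] {h : ℕ → α}
    {N : ℕ} (hper : Periodic h N) (hN : 0 < N) (x : ℕ) :
    (∀ y, h x ≤ h y) ↔ ∀ ℓ ≤ N, h x ≤ h (x + ℓ) := by
  refine ⟨fun hmin ℓ _ => hmin _, fun hle y => ?_⟩
  have hx : x ≤ y + x * N := le_add_left (Nat.le_mul_of_pos_right x hN)
  calc h x ≤ h (x + (y + x * N - x) % N) := hle _ (Nat.mod_lt _ hN).le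
    _ = h (x + (y + x * N - x)) := (hper.const_add x).map_mod_nat _
    _ = h (y + x * N) := by rw [Nat.add_sub_cancel' hx]
    _ = h y := hper.nat_mul x y

theorem Function.Periodic.existsUnique_fin_forall_le {α : Type*} [LinearOrder α] {h : ℕ → α}
    {N : ℕ} [NeZero N] (hper : Periodic h N) (hinj : Set.InjOn h (Set.Iio N)) :
    ∃! r : Fin N, ∀ y, h r ≤ h y := by
  obtain ⟨r, -, hr⟩ := exists_min_image univ (fun r : Fin N => h r) univ_nonempty
  refine ⟨r, fun y => ?_, fun r' hr' =>
    Fin.ext (hinj r'.isLt r.isLt (le_antisymm (hr' r) (hr r' (mem_univ _))))⟩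
  rw [← hper.map_mod_nat y]
  exact hr ⟨y % N, Nat.mod_lt _ (NeZero.pos N)⟩ (mem_univ _)

theorem AddAction.card_eq_card_mul_of_existsUnique {G X : Type*} [AddGroup G] [AddAction G X]
    (Y : Set X) (h : ∀ x : X, ∃! g : G, g +ᵥ x ∈ Y) : Nat.card X = Nat.card Y * Nat.card G := by
  choose g hg huniq using h
  rw [← Nat.card_prod]
  exact Nat.card_congr
    { toFun := fun x => (⟨g x +ᵥ x, hg x⟩, g x)
      invFun := fun p => -p.2 +ᵥ (p.1 : X)
      left_inv := fun x => neg_vadd_vadd _ _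
      right_inv := fun ⟨y, a⟩ => by
        have : g (-a +ᵥ (y : X)) = a := (huniq _ a (by simpa only [vadd_neg_vadd] using y.2)).symm
        ext <;> simp [this] }

section Cyclic

open Fin.NatCast Pointwise

variable {N : ℕ} [NeZero N]

/-- `j` is read modulo `N`, so this counts the `N`-periodic extension of `s` below `x`. -/
def countBelow (s : Finset (Fin N)) (x : ℕ) : ℕ := #{j ∈ range x | ((j : ℕ) : Fin N) ∈ s}

def IsAboveDiagonal (s : Finset (Fin N)) : Prop := ∀ ℓ ≤ N, #s * ℓ ≤ N * countBelow s ℓ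

def height (s : Finset (Fin N)) (x : ℕ) : ℤ := N * countBelow s x - #s * x

variable (s : Finset (Fin N))

theorem countBelow_eq_card_filter_val_lt {ℓ : ℕ} (hℓ : ℓ ≤ N) :
    countBelow s ℓ = #{a ∈ s | a.val < ℓ} := by
  rw [countBelow, ← card_map Fin.valEmbedding]
  congr 1
  ext j
  simp only [mem_filter, mem_range, mem_map, Fin.valEmbedding_apply]
  constructor
  · rintro ⟨hj, hjs⟩
    have hjN := Fin.val_cast_of_lt (hj.trans_le hℓ)
    exact ⟨j, ⟨hjs, by rwa [hjN]⟩, hjN⟩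
  · rintro ⟨a, ⟨ha, hlt⟩, rfl⟩
    simp [ha, hlt]

theorem countBelow_self : countBelow s N = #s := by
  rw [countBelow_eq_card_filter_val_lt s le_rfl, filter_true_of_mem fun a _ => a.isLt]

theorem countBelow_add (x y : ℕ) :
    countBelow s (x + y) = countBelow s x + #{j ∈ range y | ((x + j : ℕ) : Fin N) ∈ s} := by
  simp only [countBelow, card_filter, sum_range_add]

theorem countBelow_vadd (t : Fin N) (y : ℕ) :
    countBelow (t +ᵥ s) y = #{j ∈ range y | (((-t).val + j : ℕ) : Fin N) ∈ s} := by
  simp only [countBelow, ← Finset.neg_vadd_mem_iff, vadd_eq_add, Nat.cast_add,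
    Fin.cast_val_eq_self]

theorem isAboveDiagonal_iff_height_nonneg : IsAboveDiagonal s ↔ ∀ ℓ ≤ N, 0 ≤ height s ℓ := by
  refine forall₂_congr fun ℓ _ => ?_
  rw [height, sub_nonneg]
  norm_cast

theorem height_periodic : Periodic (height s) N := fun x => by
  have : countBelow s (x + N) = countBelow s x + #s := by
    rw [add_comm x, countBelow_add, countBelow_self, add_comm]
    simp only [countBelow, Nat.cast_add, Fin.natCast_self, zero_add]
  simp only [height, this]
  push_cast
  ring

theorem height_vadd (t : Fin N) (ℓ : ℕ) :
    height (t +ᵥ s) ℓ = height s ((-t).val + ℓ) - height s (-t).val := by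
  simp only [height, countBelow_add, countBelow_vadd, card_vadd_finset]
  push_cast
  ring

theorem height_injOn (hs : Nat.Coprime #s N) : Set.InjOn (height s) (Set.Iio N) := by
  intro x hx y hy hxy
  have hdvd : (N : ℤ) ∣ #s * ((x : ℤ) - y) :=
    ⟨countBelow s x - countBelow s y, by simp only [height] at hxy; linarith⟩
  have := Int.eq_zero_of_abs_lt_dvd
    ((Nat.isCoprime_iff_coprime.2 hs.symm).dvd_of_dvd_mul_left hdvd)
    (by simp only [Set.mem_Iio] at hx hy; rw [abs_lt]; omega)
  omega

theorem isAboveDiagonal_vadd_iff (t : Fin N) :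
    IsAboveDiagonal (t +ᵥ s) ↔ ∀ y, height s (-t).val ≤ height s y := by
  rw [isAboveDiagonal_iff_height_nonneg,
    (height_periodic s).forall_le_iff_forall_le_add (NeZero.pos N)]
  simp only [height_vadd, sub_nonneg]

theorem existsUnique_isAboveDiagonal_vadd (hs : Nat.Coprime #s N) :
    ∃! t : Fin N, IsAboveDiagonal (t +ᵥ s) := by
  simp only [isAboveDiagonal_vadd_iff]
  exact (Equiv.neg (Fin N)).existsUnique_congr_right.2
    ((height_periodic s).existsUnique_fin_forall_le (height_injOn s hs))

theorem card_isAboveDiagonal_mul {n : ℕ} (hn : Nat.Coprime n N) :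
    Nat.card {s : Set.powersetCard (Fin N) n // IsAboveDiagonal (s : Finset (Fin N))} * N =
      N.choose n := by
  have := AddAction.card_eq_card_mul_of_existsUnique (G := Fin N)
    {s : Set.powersetCard (Fin N) n | IsAboveDiagonal (s : Finset (Fin N))} fun s => by
      simpa using existsUnique_isAboveDiagonal_vadd (s : Finset (Fin N))
        (by rwa [Set.powersetCard.card_eq s])
  rw [Set.powersetCard.card, Nat.card_fin] at this
  exact this.symm

theorem isAboveDiagonal_ofFinEmbEquiv_iff {n : ℕ} (g : Fin n ↪o Fin N) :
    IsAboveDiagonal (Set.powersetCard.ofFinEmbEquiv g : Finset (Fin N)) ↔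
      ∀ i, n * (g i).val ≤ N * i := by
  have hmono : Monotone fun i => (g i).val := fun i j hij => g.monotone hij
  rw [← hmono.forall_mul_le_mul_card_filter_lt_iff (NeZero.pos N)]
  refine forall₂_congr fun ℓ hℓ => ?_
  rw [countBelow_eq_card_filter_val_lt _ hℓ, Set.powersetCard.card_eq]
  simp [Set.powersetCard.ofFinEmbEquiv_apply, Set.powersetCard.ofFinEmb, filter_map]

end Cyclic

theorem stmt_1_general (m n : ℕ) (hm : 0 < m) (hcop : Nat.Coprime m n) :
    (m + n) * Nat.card {f : Fin n → ℕ // Monotone f ∧ IsParkingFn m n f} =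
      Nat.choose (m + n) n := by
  have : NeZero (m + n) := ⟨by omega⟩
  have parkingEquiv :
      {f : Fin n → ℕ // Monotone f ∧ IsParkingFn m n f} ≃
        {s : Set.powersetCard (Fin (m + n)) n // IsAboveDiagonal (s : Finset (Fin (m + n)))} :=
    (Equiv.subtypeEquivRight fun _ => and_congr_right fun hf =>
        isParkingFn_iff_forall_mul_le hf hm)
      |>.trans (staircaseEquiv m n)
      |>.trans (Set.powersetCard.ofFinEmbEquiv.subtypeEquiv fun g =>
        (isAboveDiagonal_ofFinEmbEquiv_iff g).symm)
  rw [mul_comm, Nat.card_congr parkingEquiv]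
  exact card_isAboveDiagonal_mul (Nat.coprime_add_self_right.2 hcop.symm)

/-- The number of nondecreasing `m/n`-parking functions equals the rational
Catalan number `(1/(m+n))·C(m+n,n)`, for `m`, `n` coprime. -/
theorem stmt_1 (m n : ℕ) (hm : 0 < m) (hn : 0 < n) (hcop : Nat.Coprime m n) :
    (m + n) * Nat.card {f : Fin n → ℕ // Monotone f ∧ IsParkingFn m n f} =
      Nat.choose (m + n) n :=
  stmt_1_general m n hm hcop
end

section
/- The map ω ↦ ω*(x) := 1 - ω(1-x) is an involution on affine permutations that preserves the set of m-stable affine permutations; moreover (i,j) ↦ (1-j, 1-i) is a height-preserving bijection from the set of pairs i<j with ω(i)>ω(j) to the set of pairs i<j with ω*(i)>ω*(j). -/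
/-!
Writing `r x = 1 - x`, the map `ω ↦ ω* = dual ω` is conjugation `ω ↦ r ∘ ω ∘ r` by the involution
`r`, so it is an involution preserving bijectivity. Since `r` reverses the order and `r (x + k) = r x - k`,
conjugating by it preserves `k`-periodicity and `k`-stability, and turns an inversion `(i, j)` of
`ω` into the inversion `(r j, r i)` of `ω*`, of the same height. For the normalisation, periodicity
gives `ω (1 - i) = ω (n + 1 - i) - n`, and `i ↦ n + 1 - i` permutes `[1, n]`, so
`∑_{i=1}^n ω* i = n + n² - ∑_{i=1}^n ω i`, which is `n (n + 1) / 2` exactly when `∑ ω i` is.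
-/

namespace AffinePerm

open Finset Function

def dual (ω : ℤ → ℤ) (x : ℤ) : ℤ := 1 - ω (1 - x)

def inversions (ω : ℤ → ℤ) : Set (ℤ × ℤ) := {p | p.1 < p.2 ∧ ω p.2 < ω p.1}

def reflectPair (p : ℤ × ℤ) : ℤ × ℤ := (1 - p.2, 1 - p.1)

theorem involutive_one_sub : Involutive fun x : ℤ => 1 - x := fun x => sub_sub_cancel 1 x

theorem dual_eq_comp (ω : ℤ → ℤ) : dual ω = (1 - ·) ∘ ω ∘ (1 - ·) := rfl

theorem dual_dual (ω : ℤ → ℤ) : dual (dual ω) = ω := by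
  funext x
  simp [dual]

theorem _root_.Function.Bijective.affinePerm_dual {ω : ℤ → ℤ} (h : Bijective ω) :
    Bijective (dual ω) := by
  rw [dual_eq_comp]
  exact involutive_one_sub.bijective.comp (h.comp involutive_one_sub.bijective)

theorem dual_add {ω : ℤ → ℤ} {k : ℤ} (h : ∀ x, ω (x + k) = ω x + k) (x : ℤ) :
    dual ω (x + k) = dual ω x + k := by
  have := h (1 - x - k)
  rw [sub_add_cancel] at this
  simp only [dual, ← sub_sub]
  linarith

theorem dual_lt_dual_add {ω : ℤ → ℤ} {k : ℤ} (h : ∀ x, ω x < ω (x + k)) (x : ℤ) :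
    dual ω x < dual ω (x + k) := by
  have := h (1 - x - k)
  rw [sub_add_cancel] at this
  simp only [dual, ← sub_sub]
  linarith

theorem sum_Icc_comp_one_sub {ω : ℤ → ℤ} {n : ℕ} (h : ∀ x, ω (x + n) = ω x + n) :
    ∑ i ∈ Icc 1 (n : ℤ), ω (1 - i) = ∑ i ∈ Icc 1 (n : ℤ), (ω i - n) := by
  refine sum_nbij' (fun i => n + 1 - i) (fun i => n + 1 - i) ?_ ?_ ?_ ?_ ?_
  · intro i hi
    simp only [mem_Icc] at hi ⊢
    omega
  · intro i hi
    simp only [mem_Icc] at hi ⊢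
    omega
  · intro i _
    ring
  · intro i _
    ring
  · intro i _
    have := h (1 - i)
    rw [show 1 - i + n = n + 1 - i by ring] at this
    linarith

theorem sum_Icc_dual {ω : ℤ → ℤ} {n : ℕ} (h : ∀ x, ω (x + n) = ω x + n) :
    ∑ i ∈ Icc 1 (n : ℤ), dual ω i = n + n * n - ∑ i ∈ Icc 1 (n : ℤ), ω i := by
  simp only [dual, sum_sub_distrib, sum_Icc_comp_one_sub h, sum_const, Int.card_Icc,
    add_sub_cancel_right, Int.toNat_natCast, nsmul_eq_mul, mul_one]
  ring

theorem mapsTo_inversions_dual (ω : ℤ → ℤ) :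
    Set.MapsTo reflectPair (inversions ω) (inversions (dual ω)) := by
  rintro ⟨i, j⟩ ⟨hij : i < j, hω : ω j < ω i⟩
  refine ⟨by simp only [reflectPair]; omega, ?_⟩
  show 1 - ω (1 - (1 - i)) < 1 - ω (1 - (1 - j))
  simp only [sub_sub_cancel]
  omega

theorem bijOn_inversions_dual (ω : ℤ → ℤ) :
    Set.BijOn reflectPair (inversions ω) (inversions (dual ω)) := by
  have hinv : Involutive reflectPair := fun p => by simp [reflectPair]
  refine Set.InvOn.bijOn ⟨fun p _ => hinv p, fun p _ => hinv p⟩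
    (mapsTo_inversions_dual ω) ?_
  simpa only [dual_dual] using mapsTo_inversions_dual (dual ω)

end AffinePerm

open AffinePerm in
theorem stmt_4_general (n m : ℕ) (ω : ℤ → ℤ)
    (hbij : Function.Bijective ω)
    (hper : ∀ x : ℤ, ω (x + n) = ω x + n)
    (hsum : 2 * ∑ i ∈ Finset.Icc (1 : ℤ) (n : ℤ), ω i = n * (n + 1)) :
    Function.Bijective (fun x : ℤ => 1 - ω (1 - x)) ∧
    (∀ x : ℤ, (1 - ω (1 - (x + n))) = (1 - ω (1 - x)) + n) ∧
    (2 * ∑ i ∈ Finset.Icc (1 : ℤ) (n : ℤ), (1 - ω (1 - i)) = n * (n + 1)) ∧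
    (∀ x : ℤ, 1 - (1 - ω (1 - (1 - x))) = ω x) ∧
    ((∀ x : ℤ, ω x < ω (x + m)) →
      ∀ x : ℤ, (1 - ω (1 - x)) < (1 - ω (1 - (x + m)))) ∧
    Set.BijOn (fun p : ℤ × ℤ => (1 - p.2, 1 - p.1))
      {p : ℤ × ℤ | p.1 < p.2 ∧ ω p.2 < ω p.1}
      {p : ℤ × ℤ | p.1 < p.2 ∧ (1 - ω (1 - p.2)) < (1 - ω (1 - p.1))} ∧
    (∀ p : ℤ × ℤ, (1 - p.1) - (1 - p.2) = p.2 - p.1) := by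
  have hsum_dual : 2 * ∑ i ∈ Finset.Icc (1 : ℤ) (n : ℤ), dual ω i = n * (n + 1) := by
    rw [sum_Icc_dual hper]
    linarith
  exact ⟨hbij.affinePerm_dual, dual_add hper, hsum_dual, congrFun (dual_dual ω),
    dual_lt_dual_add, bijOn_inversions_dual ω, fun p => by ring⟩

/-- The star involution `ω*(x) = 1 - ω(1-x)` maps affine permutations to affine
permutations, is an involution, preserves `m`-stability, and
`(i,j) ↦ (1-j, 1-i)` is a height-preserving bijection between inversion sets. -/
theorem stmt_4 (n m : ℕ) (hn : 0 < n) (hm : 0 < m) (ω : ℤ → ℤ)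
    (hbij : Function.Bijective ω)
    (hper : ∀ x : ℤ, ω (x + n) = ω x + n)
    (hsum : 2 * ∑ i ∈ Finset.Icc (1 : ℤ) (n : ℤ), ω i = n * (n + 1)) :
    Function.Bijective (fun x : ℤ => 1 - ω (1 - x)) ∧
    (∀ x : ℤ, (1 - ω (1 - (x + n))) = (1 - ω (1 - x)) + n) ∧
    (2 * ∑ i ∈ Finset.Icc (1 : ℤ) (n : ℤ), (1 - ω (1 - i)) = n * (n + 1)) ∧
    (∀ x : ℤ, 1 - (1 - ω (1 - (1 - x))) = ω x) ∧
    ((∀ x : ℤ, ω x < ω (x + m)) →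
      ∀ x : ℤ, (1 - ω (1 - x)) < (1 - ω (1 - (x + m)))) ∧
    Set.BijOn (fun p : ℤ × ℤ => (1 - p.2, 1 - p.1))
      {p : ℤ × ℤ | p.1 < p.2 ∧ ω p.2 < ω p.1}
      {p : ℤ × ℤ | p.1 < p.2 ∧ (1 - ω (1 - p.2)) < (1 - ω (1 - p.1))} ∧
    (∀ p : ℤ × ℤ, (1 - p.1) - (1 - p.2) = p.2 - p.1) :=
  stmt_4_general n m ω hbij hper hsum
end

section
/- For m = kn+r with 0 < r < n coprime to n, let c = (m-1)(n+1)/2 and let ω_m be the affine permutation with ω_m(i) = mi - c for 1 ≤ i ≤ n (extended by ω_m(x+n) = ω_m(x)+n). Then ω_m is a well-defined affine permutation (in particular Σ_{i=1}^n ω_m(i) = n(n+1)/2), and ω_m is m-restricted, i.e., for all i < j, ω_m(i) - ω_m(j) ≠ m. -/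
/-!
Writing `x - 1 = q n + s` with `0 ≤ s < n`, the map is `ω(x) = m x - c - (m - 1) n q`. Hence
`ω(x + n) = ω(x) + n` and `ω(x) ≡ m x - c (mod n)`; since `m` is invertible mod `n`, `ω` permutes
the residues mod `n`, and an `n`-equivariant map of `ℤ` that permutes residues is a bijection.
If `ω(i) - ω(j) = m` with `i < j`, reducing mod `n` forces `i = j + 1 + t n` with `t n < 0`, but
`ω(j + 1) ≤ ω(j) + m` because `q` is nondecreasing in `x` and `m ≥ 1`, so
`ω(i) = ω(j + 1) + t n < ω(j) + m`.
-/

open Function Finset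

section Equivariant

variable {f : ℤ → ℤ} {n : ℤ}

lemma map_add_mul_of_map_add (hf : ∀ x, f (x + n) = f x + n) (x t : ℤ) :
    f (x + t * n) = f x + t * n := by
  have hper : Periodic (fun x => f x - x) n := fun x => by
    change f (x + n) - (x + n) = f x - x
    rw [hf]; ring
  have : f (x + t * n) - (x + t * n) = f x - x := hper.int_mul t x
  linarith

lemma injective_of_map_add (hf : ∀ x, f (x + n) = f x + n)
    (hmod : ∀ x y, n ∣ f x - f y → n ∣ x - y) : Injective f := by
  intro x y hxy
  obtain ⟨t, ht⟩ := hmod x y (by simp [hxy])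
  have hx : f x = f y + t * n := by
    rw [show x = y + t * n by linarith, map_add_mul_of_map_add hf]
  linarith

lemma surjective_of_map_add (hf : ∀ x, f (x + n) = f x + n)
    (hmod : ∀ y, ∃ x, n ∣ y - f x) : Surjective f := by
  intro y
  obtain ⟨x, t, ht⟩ := hmod y
  exact ⟨x + t * n, by rw [map_add_mul_of_map_add hf]; linarith⟩

end Equivariant

lemma two_mul_sum_Icc_one_id {N : ℤ} (hN : 0 ≤ N) :
    2 * ∑ i ∈ Icc (1 : ℤ) N, i = N * (N + 1) := by
  induction N, hN using Int.leInduction with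
  | base => simp
  | succ N hN ih =>
    have hIcc : Icc (1 : ℤ) (N + 1) = insert (N + 1) (Icc 1 N) := by
      ext x; simp only [mem_Icc, mem_insert]; omega
    rw [hIcc, sum_insert (by simp only [mem_Icc]; omega), mul_add, ih]
    ring

def omegaMap (n m c x : ℤ) : ℤ := m * x - c - (m - 1) * n * ((x - 1) / n)

section OmegaMap

variable {n m c : ℤ}

lemma omegaMap_eq (x : ℤ) :
    omegaMap n m c x = m * ((x - 1) % n + 1) - c + ((x - 1) / n) * n := by
  rw [omegaMap, Int.emod_def]
  ring

lemma omegaMap_of_mem_Icc {x : ℤ} (hx : x ∈ Icc 1 n) : omegaMap n m c x = m * x - c := by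
  rw [mem_Icc] at hx
  rw [omegaMap, Int.ediv_eq_zero_of_lt (by omega) (by omega)]
  ring

lemma omegaMap_add_self (hn : n ≠ 0) (x : ℤ) : omegaMap n m c (x + n) = omegaMap n m c x + n := by
  have hq : (x + n - 1) / n = (x - 1) / n + 1 := by
    rw [show x + n - 1 = x - 1 + 1 * n by ring, Int.add_mul_ediv_right _ _ hn]
  rw [omegaMap, omegaMap, hq]
  ring

lemma dvd_omegaMap_sub (x y : ℤ) : n ∣ omegaMap n m c x - omegaMap n m c y - m * (x - y) :=
  ⟨(m - 1) * ((y - 1) / n - (x - 1) / n), by rw [omegaMap, omegaMap]; ring⟩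

lemma omegaMap_succ_le (hn : 0 < n) (hm : 0 < m) (x : ℤ) :
    omegaMap n m c (x + 1) ≤ omegaMap n m c x + m := by
  have hq : (m - 1) * n * ((x - 1) / n) ≤ (m - 1) * n * (x / n) :=
    mul_le_mul_of_nonneg_left (Int.ediv_le_ediv hn (by omega)) (by nlinarith)
  rw [omegaMap, omegaMap, add_sub_cancel_right]
  linarith

lemma dvd_sub_of_dvd_omegaMap_sub (hmn : IsCoprime m n) {x y d : ℤ}
    (h : n ∣ omegaMap n m c x - omegaMap n m c y - m * d) : n ∣ x - y - d := by
  refine hmn.symm.dvd_of_dvd_mul_left (dvd_neg.1 ?_)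
  convert dvd_sub (dvd_omegaMap_sub x y) h using 1
  ring

lemma bijective_omegaMap (hn : n ≠ 0) (hmn : IsCoprime m n) : Bijective (omegaMap n m c) := by
  refine ⟨injective_of_map_add (omegaMap_add_self hn) fun x y h => ?_,
    surjective_of_map_add (omegaMap_add_self hn) fun y => ?_⟩
  · simpa using dvd_sub_of_dvd_omegaMap_sub (d := 0) hmn (by simpa using h)
  · obtain ⟨u, v, huv⟩ := hmn
    refine ⟨u * (y + c), v * (y + c) + (m - 1) * ((u * (y + c) - 1) / n), ?_⟩
    rw [omegaMap]
    linear_combination (-(y + c)) * huv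

lemma two_mul_sum_omegaMap (hn : 0 ≤ n) (hc : 2 * c = (m - 1) * (n + 1)) :
    2 * ∑ i ∈ Icc 1 n, omegaMap n m c i = n * (n + 1) := by
  have hcard : ((Icc (1 : ℤ) n).card : ℤ) = n := by rw [Int.card_Icc]; omega
  rw [sum_congr rfl fun i hi => omegaMap_of_mem_Icc hi, sum_sub_distrib, ← mul_sum,
    sum_const, nsmul_eq_mul, hcard, mul_sub, ← mul_assoc, mul_comm 2 m, mul_assoc,
    two_mul_sum_Icc_one_id hn]
  linear_combination (-n) * hc

lemma omegaMap_sub_ne (hn : 0 < n) (hm : 0 < m) (hmn : IsCoprime m n) {i j : ℤ} (hij : i < j) :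
    omegaMap n m c i - omegaMap n m c j ≠ m := by
  intro h
  -- Reducing mod `n` gives `i ≡ j + 1`.
  obtain ⟨t, ht⟩ := dvd_sub_of_dvd_omegaMap_sub (d := 1) hmn (by rw [h, mul_one, sub_self]; simp)
  have hi : omegaMap n m c i = omegaMap n m c (j + 1) + t * n := by
    rw [show i = j + 1 + t * n by linarith, map_add_mul_of_map_add (omegaMap_add_self hn.ne')]
  have htn : t * n < 0 := by linarith
  linarith [omegaMap_succ_le (c := c) hn hm j]

end OmegaMap

theorem stmt_5_general (n m c : ℤ) (hn : 2 ≤ n) (hm : 0 < m)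
    (hcop : IsCoprime m n)
    (hc : 2 * c = (m - 1) * (n + 1))
    (ωm : ℤ → ℤ)
    (hωm : ∀ x : ℤ, ωm x = m * ((x - 1) % n + 1) - c + ((x - 1) / n) * n) :
    Function.Bijective ωm ∧
    (∀ x : ℤ, ωm (x + n) = ωm x + n) ∧
    (2 * ∑ i ∈ Finset.Icc (1 : ℤ) n, ωm i = n * (n + 1)) ∧
    (∀ i j : ℤ, i < j → ωm i - ωm j ≠ m) := by
  obtain rfl : ωm = omegaMap n m c := funext fun x => (hωm x).trans (omegaMap_eq x).symm
  exact ⟨bijective_omegaMap (by omega) hcop, omegaMap_add_self (by omega),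
    two_mul_sum_omegaMap (by omega) hc, fun i j hij => omegaMap_sub_ne (by omega) hm hcop hij⟩

/-- For `m = kn + r` with `0 < r < n` and `m` coprime to `n`, with
`c = (m-1)(n+1)/2`, the map `ω_m` given by `ω_m(i) = m·i - c` for `1 ≤ i ≤ n`,
extended `n`-periodically, is a well-defined affine permutation
(in particular `Σ_{i=1}^n ω_m(i) = n(n+1)/2`) and is `m`-restricted:
for all `i < j`, `ω_m(i) - ω_m(j) ≠ m`. -/
theorem stmt_5 (n m k r c : ℤ) (hn : 2 ≤ n) (hm : 0 < m)
    (hcop : IsCoprime m n) (hmkr : m = k * n + r) (hr0 : 0 < r) (hrn : r < n)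
    (hc : 2 * c = (m - 1) * (n + 1))
    (ωm : ℤ → ℤ)
    (hωm : ∀ x : ℤ, ωm x = m * ((x - 1) % n + 1) - c + ((x - 1) / n) * n) :
    Function.Bijective ωm ∧
    (∀ x : ℤ, ωm (x + n) = ωm x + n) ∧
    (2 * ∑ i ∈ Finset.Icc (1 : ℤ) n, ωm i = n * (n + 1)) ∧
    (∀ i j : ℤ, i < j → ωm i - ωm j ≠ m) :=
  stmt_5_general n m c hn hm hcop hc ωm hωm
end

section
/- The Anderson map A from m-stable affine permutations to m/n-parking functions is a bijection. Explicitly, for ω m-stable let M_ω = min{i : ω(i) > 0}; for each α ∈ {1,...,n} write ω^{-1}(α) - M_ω = rm - kn uniquely with r ∈ {0,...,n-1}; then necessarily k ≥ 0, and A_ω(α) := k defines an m/n-parking function, and ω ↦ A_ω is bijective. -/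
/-- Affine permutation of period `n`. -/
def IsAffinePerm (n : ℕ) (ω : ℤ ≃ ℤ) : Prop :=
  (∀ x : ℤ, ω (x + n) = ω x + n) ∧
  2 * ∑ i ∈ Finset.Icc (1 : ℤ) (n : ℤ), ω i = n * (n + 1)

/-- `m`-stability: no inversions of height `m`. -/
def IsMStable (m : ℕ) (ω : ℤ ≃ ℤ) : Prop := ∀ x : ℤ, ω x < ω (x + m)

/-!
Write `M = M_ω` and `ω⁻¹(α + 1) - M = r(α) m - k(α) n`. Periodicity turns this into
`ω(M + r(α) m) = α + 1 + k(α) n`: the points `M + r m`, `0 ≤ r < n`, form a complete residue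
system mod `n`, and `α ↦ r(α)` records where the value with residue `α + 1` sits. Stability makes
`r ↦ ω(M + r m)` increasing, so `r(α)` is the rank of the key `α + 1 + k(α) n`, and `ω(M) > 0`
gives `k ≥ 0`; minimality of `M` gives `k(α) n ≤ r(α) m`, which is the parking condition.
Conversely, a parking function determines the ranks, hence `ω` on the progression up to the
choice of `M`, which the normalisation of `∑ ω(i)` pins down. For the inverse one sorts the keys
`b_0 < ⋯ < b_{n-1}` of `α + 1 + f(α) n` and sets `ω(M + r m - k n) = b_r - k n`.
-/

namespace Anderson

open Finset Function

variable {m n : ℕ}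

section Decomposition

variable [NeZero n]

-- `(m : ZMod n)⁻¹` is a genuine inverse only when `m` and `n` are coprime.
variable (m n) in
def rCoeff (x : ℤ) : Fin n := ⟨((x : ZMod n) * (m : ZMod n)⁻¹).val, ZMod.val_lt _⟩

variable (m n) in
def kCoeff (x : ℤ) : ℤ := ((rCoeff m n x : ℤ) * m - x) / n

theorem rCoeff_mul_sub_kCoeff_mul (hcop : m.Coprime n) (x : ℤ) :
    (rCoeff m n x : ℤ) * m - kCoeff m n x * n = x := by
  have hdvd : (n : ℤ) ∣ (rCoeff m n x : ℤ) * m - x := by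
    rw [← ZMod.intCast_zmod_eq_zero_iff_dvd]
    push_cast [rCoeff, ZMod.natCast_zmod_val]
    rw [mul_assoc, mul_comm _ (m : ZMod n), ZMod.coe_mul_inv_eq_one m hcop, mul_one, sub_self]
  rw [kCoeff, Int.ediv_mul_cancel hdvd]
  ring

theorem rCoeff_kCoeff_eq (hcop : m.Coprime n) {r : Fin n} {k x : ℤ}
    (h : (r : ℤ) * m - k * n = x) : rCoeff m n x = r ∧ kCoeff m n x = k := by
  have hr : rCoeff m n x = r := by
    have hx : (x : ZMod n) = r * m := by rw [← h]; push_cast; simp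
    apply Fin.ext
    change ((x : ZMod n) * (m : ZMod n)⁻¹).val = r
    rw [hx, mul_assoc, ZMod.coe_mul_inv_eq_one m hcop, mul_one, ZMod.val_natCast,
      Nat.mod_eq_of_lt r.isLt]
  refine ⟨hr, ?_⟩
  have := rCoeff_mul_sub_kCoeff_mul hcop x
  rw [hr] at this
  have hn : (n : ℤ) ≠ 0 := by exact_mod_cast NeZero.ne n
  exact mul_right_cancel₀ hn (by linarith)

theorem exists_eq_add_mul_sub_mul (hcop : m.Coprime n) (M x : ℤ) :
    ∃ (r : Fin n) (k : ℤ), x = M + r * m - k * n :=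
  ⟨rCoeff m n (x - M), kCoeff m n (x - M), by linarith [rCoeff_mul_sub_kCoeff_mul hcop (x - M)]⟩

end Decomposition

theorem map_add_mul {φ : ℤ → ℤ} {p : ℤ} (hφ : ∀ x, φ (x + p) = φ x + p) (x t : ℤ) :
    φ (x + t * p) = φ x + t * p := by
  have hper : Periodic (fun x => φ x - x) p := fun x => by
    change φ (x + p) - (x + p) = φ x - x
    rw [hφ]; ring
  have := hper.int_mul t x
  simp only [Int.cast_id] at this
  linarith

theorem exists_eq_add_mul_of_intCast_eq {x y : ℤ} (h : (x : ZMod n) = y) :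
    ∃ t : ℤ, y = x + t * n := by
  obtain ⟨t, ht⟩ := (ZMod.intCast_eq_intCast_iff_dvd_sub x y n).mp h
  exact ⟨t, by linarith⟩

theorem natCast_fin_injective : Injective fun i : Fin n => ((i : ℕ) : ZMod n) := fun i j h =>
  Fin.ext (by simpa [ZMod.natCast_eq_natCast_iff', Nat.mod_eq_of_lt] using h)

theorem progression_injective (hcop : m.Coprime n) (M : ℤ) :
    Injective fun r : Fin n => ((M + r * m : ℤ) : ZMod n) := fun i j h => by
  have h' : ((i : ℕ) : ZMod n) * m = (j : ℕ) * m := by push_cast at h; linear_combination h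
  apply natCast_fin_injective
  calc ((i : ℕ) : ZMod n) = i * m * (m : ZMod n)⁻¹ := by
        rw [mul_assoc, ZMod.coe_mul_inv_eq_one m hcop, mul_one]
    _ = (j : ℕ) := by rw [h', mul_assoc, ZMod.coe_mul_inv_eq_one m hcop, mul_one]

theorem sum_Icc_eq_sum_fin {M : Type*} [AddCommMonoid M] (g : ℤ → M) : ∑ i ∈ Icc (1 : ℤ) n, g i = ∑ i : Fin n, g (i + 1) := by
  have hIcc : Icc (1 : ℤ) n = univ.image fun i : Fin n => (i : ℤ) + 1 := by
    ext x
    simp only [mem_Icc, mem_image, mem_univ, true_and]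
    constructor
    · intro h; exact ⟨⟨(x - 1).toNat, by omega⟩, by simp only; omega⟩
    · rintro ⟨i, rfl⟩; have := i.isLt; omega
  rw [hIcc, sum_image fun a _ b _ h => Fin.ext (by simpa using h)]

theorem two_mul_sum_fin : 2 * ∑ i : Fin n, (i : ℤ) = n * (n - 1) := by
  rw [Fin.sum_univ_eq_sum_range (fun i => (i : ℤ)) n]
  rcases n.eq_zero_or_pos with rfl | hn
  · simp
  · have := congrArg (Nat.cast : ℕ → ℤ) (sum_range_id_mul_two n)
    push_cast [Nat.cast_sub hn] at this
    linarith

theorem two_mul_sum_Icc_eq_iff (φ : ℤ → ℤ) :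
    2 * ∑ i ∈ Icc (1 : ℤ) n, φ i = n * (n + 1) ↔ ∑ i ∈ Icc (1 : ℤ) n, (φ i - i) = 0 := by
  have h := two_mul_sum_fin (n := n)
  rw [sum_sub_distrib, sum_Icc_eq_sum_fin (fun i => i), sum_add_distrib]
  simp only [sum_const, card_univ, Fintype.card_fin, nsmul_eq_mul, mul_one]
  constructor <;> intro <;> linarith

section Periodic

variable [NeZero n]

theorem bijective_of_map_add {φ : ℤ → ℤ} (hφ : ∀ x, φ (x + n) = φ x + n)
    (hres : ∀ x y, (φ x : ZMod n) = φ y → (x : ZMod n) = y) : Bijective φ := by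
  refine ⟨fun x y hxy => ?_, fun y => ?_⟩
  · obtain ⟨t, rfl⟩ := exists_eq_add_mul_of_intCast_eq (hres x y (by rw [hxy]))
    rw [map_add_mul hφ] at hxy
    have ht : t * n = 0 := by linarith
    simp [NeZero.ne n] at ht
    simp [ht]
  · let Φ : ZMod n → ZMod n := fun z => (φ (z.val : ℤ) : ZMod n)
    have hΦ : Injective Φ := fun z w h => by
      simpa [ZMod.natCast_zmod_val] using hres _ _ h
    obtain ⟨z, hz⟩ := (Finite.injective_iff_surjective.mp hΦ) (y : ZMod n)
    obtain ⟨t, ht⟩ := exists_eq_add_mul_of_intCast_eq hz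
    exact ⟨z.val + t * n, by rw [map_add_mul hφ, ht]⟩

theorem sum_comp_eq_of_periodic {M : Type*} [AddCommMonoid M] {g : ℤ → M} (hg : Periodic g n) {u v : Fin n → ℤ}
    (hu : Injective fun i => (u i : ZMod n)) (hv : Injective fun i => (v i : ZMod n)) :
    ∑ i, g (u i) = ∑ i, g (v i) := by
  have hcard : Fintype.card (Fin n) = Fintype.card (ZMod n) := by simp
  let U := Equiv.ofBijective _ ((Fintype.bijective_iff_injective_and_card _).mpr ⟨hu, hcard⟩)
  let V := Equiv.ofBijective _ ((Fintype.bijective_iff_injective_and_card _).mpr ⟨hv, hcard⟩)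
  rw [← (U.trans V.symm).sum_comp (fun i => g (v i))]
  refine sum_congr rfl fun i _ => ?_
  have h : (u i : ZMod n) = v ((U.trans V.symm) i) := (V.apply_symm_apply (U i)).symm
  obtain ⟨t, ht⟩ := exists_eq_add_mul_of_intCast_eq h
  rw [ht]
  simpa using ((hg.int_mul t) (u i)).symm

theorem sum_Icc_sub_eq_sum_progression_sub (hcop : m.Coprime n) {φ : ℤ → ℤ}
    (hφ : ∀ x, φ (x + n) = φ x + n) (M : ℤ) :
    ∑ i ∈ Icc (1 : ℤ) n, (φ i - i) = ∑ r : Fin n, (φ (M + r * m) - (M + r * m)) := by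
  have hg : Periodic (fun x => φ x - x) n := fun x => by
    change φ (x + n) - (x + n) = φ x - x
    rw [hφ]; ring
  rw [sum_Icc_eq_sum_fin]
  refine sum_comp_eq_of_periodic hg (fun i j h => natCast_fin_injective ?_)
    (progression_injective hcop M)
  simpa using h

end Periodic

theorem card_filter_apply_lt {e : Fin n → Fin n} (he : Injective e) (α : Fin n) :
    #{β | e β < e α} = e α := by
  rw [← Fin.card_Iio]
  refine card_nbij e (fun β hβ => by simpa using hβ) he.injOn fun j hj => ?_
  obtain ⟨β, rfl⟩ := (Finite.injective_iff_surjective.mp he) j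
  exact ⟨β, by simpa using hj, rfl⟩

theorem ncard_setOf_eq_card_filter (P : Fin n → Prop) [DecidablePred P] :
    {α | P α}.ncard = #{α | P α} := by
  rw [← Set.ncard_coe_finset]; congr; ext; simp

theorem isParkingFn_of_mul_le {f : Fin n → ℕ} {ρ : Fin n → Fin n} (hρ : Injective ρ)
    (h : ∀ α, f α * n ≤ ρ α * m) : IsParkingFn m n f := by
  intro ℓ _ hℓm
  rw [ncard_setOf_eq_card_filter]
  by_cases hall : ∀ α, f α < ℓ
  · rw [filter_true_of_mem fun α _ => hall α, card_univ, Fintype.card_fin]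
    exact Nat.mul_le_mul_right n hℓm
  push Not at hall
  obtain ⟨α, hα⟩ := hall
  -- Everything ranked below the lowest-ranked `α₁` with `ℓ ≤ f α₁` has `f < ℓ`.
  obtain ⟨α₁, hα₁, hmin⟩ := exists_min_image {β | ℓ ≤ f β} ρ ⟨α, by simpa using hα⟩
  simp only [mem_filter, mem_univ, true_and] at hα₁ hmin
  have hsub : univ.filter (ρ · < ρ α₁) ⊆ univ.filter (f · < ℓ) := fun β hβ => by
    simp only [mem_filter, mem_univ, true_and] at hβ ⊢
    by_contra! hβℓ
    exact absurd (hmin β hβℓ) (not_le.mpr hβ)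
  have hcard := card_le_card hsub
  rw [card_filter_apply_lt hρ] at hcard
  calc ℓ * n ≤ f α₁ * n := Nat.mul_le_mul_right n hα₁
    _ ≤ ρ α₁ * m := h α₁
    _ ≤ m * #{β | f β < ℓ} := by rw [mul_comm]; exact Nat.mul_le_mul_left m hcard

theorem _root_.IsParkingFn.apply_lt_s7 {f : Fin n → ℕ} (hf : IsParkingFn m n f) (hm : 0 < m)
    (α : Fin n) : f α < m := by
  by_contra! hα
  have h := hf m hm le_rfl
  rw [ncard_setOf_eq_card_filter] at h
  have hsub : ({β | f β < m} : Finset (Fin n)) ⊆ univ.erase α := fun β hβ =>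
    mem_erase.mpr ⟨by rintro rfl; simp at hβ; omega, mem_univ β⟩
  have := card_le_card hsub
  rw [card_erase_of_mem (mem_univ α), card_univ, Fintype.card_fin] at this
  have := Nat.le_of_mul_le_mul_left (h.trans (Nat.mul_le_mul_left m this)) hm
  have := α.pos
  omega

theorem _root_.IsParkingFn.mul_le_card {f : Fin n → ℕ} (hf : IsParkingFn m n f) (hm : 0 < m)
    (α : Fin n) : f α * n ≤ m * #{β | f β < f α} := by
  rcases (f α).eq_zero_or_pos with h0 | hpos
  · simp [h0]
  · simpa [ncard_setOf_eq_card_filter] using hf (f α) hpos (hf.apply_lt_s7 hm α).le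

def parkingKey (k : Fin n → ℤ) (α : Fin n) : ℤ := α + 1 + k α * n

theorem parkingKey_injective (k : Fin n → ℤ) : Injective (parkingKey k) := fun α β h => by
  apply natCast_fin_injective
  simpa [parkingKey] using congrArg (fun x : ℤ => (x : ZMod n)) h

noncomputable def andersonMin (ω : ℤ ≃ ℤ) : ℤ := sInf {i | 0 < ω i}

section AndersonMap

variable [NeZero n]

theorem isLeast_andersonMin {ω : ℤ ≃ ℤ} (hω : ∀ x, ω (x + n) = ω x + n) :
    IsLeast {i | 0 < ω i} (andersonMin ω) := by
  have hne : {i | 0 < ω i}.Nonempty := ⟨ω.symm 1, by simp⟩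
  have hbdd : BddBelow {i | 0 < ω i} := by
    obtain ⟨B, hB⟩ := ((Ico (0 : ℤ) n).image ω).bddAbove
    refine ⟨-B, fun i (hi : 0 < ω i) => ?_⟩
    have hn : (0 : ℤ) < n := by exact_mod_cast NeZero.pos n
    have hdec : i = i % n + i / n * n := (Int.emod_add_ediv_mul i n).symm
    have hmod : 0 ≤ i % n := Int.emod_nonneg i hn.ne'
    have hB' : ω (i % n) ≤ B :=
      hB (mem_coe.mpr (mem_image_of_mem ω (mem_Ico.mpr ⟨hmod, Int.emod_lt_of_pos i hn⟩)))
    rw [hdec, map_add_mul hω] at hi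
    rw [hdec]
    linarith
  exact ⟨Int.csInf_mem hne hbdd, fun i hi => csInf_le hbdd hi⟩

variable (m n) in
noncomputable def andersonR (ω : ℤ ≃ ℤ) (α : Fin n) : Fin n :=
  rCoeff m n (ω.symm (α + 1) - andersonMin ω)

variable (m n) in
noncomputable def andersonK (ω : ℤ ≃ ℤ) (α : Fin n) : ℤ :=
  kCoeff m n (ω.symm (α + 1) - andersonMin ω)

variable (m n) in
noncomputable def andersonMap (ω : ℤ ≃ ℤ) (α : Fin n) : ℕ := (andersonK m n ω α).toNat

theorem andersonR_mul_sub_andersonK_mul (hcop : m.Coprime n) (ω : ℤ ≃ ℤ) (α : Fin n) :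
    (andersonR m n ω α : ℤ) * m - andersonK m n ω α * n = ω.symm (α + 1) - andersonMin ω :=
  rCoeff_mul_sub_kCoeff_mul hcop _

variable {ω : ℤ ≃ ℤ} (hcop : m.Coprime n) (hω : ∀ x, ω (x + n) = ω x + n)
include hcop hω

theorem map_andersonMin_add_andersonR (α : Fin n) :
    ω (andersonMin ω + andersonR m n ω α * m) = parkingKey (andersonK m n ω) α := by
  have h := andersonR_mul_sub_andersonK_mul hcop ω α
  rw [show andersonMin ω + andersonR m n ω α * m = ω.symm (α + 1) + andersonK m n ω α * n by
    linarith, map_add_mul hω, ω.apply_symm_apply, parkingKey]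

theorem andersonR_injective : Injective (andersonR m n ω) := fun α β h => by
  apply parkingKey_injective (andersonK m n ω)
  rw [← map_andersonMin_add_andersonR hcop hω, ← map_andersonMin_add_andersonR hcop hω, h]

theorem andersonK_mul_le (α : Fin n) : andersonK m n ω α * n ≤ andersonR m n ω α * m := by
  have h := andersonR_mul_sub_andersonK_mul hcop ω α
  have hmin := (isLeast_andersonMin hω).2
    (show 0 < ω (ω.symm (α + 1)) by rw [ω.apply_symm_apply]; omega)
  linarith

end AndersonMap

theorem strictMono_map_add_mul {ω : ℤ ≃ ℤ} (hst : IsMStable m ω) (x : ℤ) :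
    StrictMono fun r : ℕ => ω (x + r * m) :=
  strictMono_nat_of_lt_succ fun r => by
    simpa only [Nat.cast_succ, add_one_mul, ← add_assoc] using hst (x + r * m)

section Stable

variable [NeZero n] {ω : ℤ ≃ ℤ} (hcop : m.Coprime n) (hω : ∀ x, ω (x + n) = ω x + n)
  (hst : IsMStable m ω)
include hcop hω hst

theorem andersonK_nonneg (α : Fin n) : 0 ≤ andersonK m n ω α := by
  have hpos : 0 < ω (andersonMin ω) := (isLeast_andersonMin hω).1
  have hle := (strictMono_map_add_mul hst (andersonMin ω)).monotone
    (Nat.zero_le (andersonR m n ω α))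
  simp only [Nat.cast_zero, zero_mul, add_zero] at hle
  rw [map_andersonMin_add_andersonR hcop hω, parkingKey] at hle
  by_contra! hk
  have : andersonK m n ω α * n ≤ -1 * n :=
    mul_le_mul_of_nonneg_right (by omega) (by positivity)
  have := α.isLt
  omega

theorem andersonR_lt_andersonR_iff {α β : Fin n} :
    andersonR m n ω β < andersonR m n ω α ↔
      parkingKey (andersonK m n ω) β < parkingKey (andersonK m n ω) α := by
  rw [← map_andersonMin_add_andersonR hcop hω, ← map_andersonMin_add_andersonR hcop hω,
    Fin.lt_def]
  exact (strictMono_map_add_mul hst _).lt_iff_lt.symm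

theorem andersonR_eq_card (α : Fin n) :
    (andersonR m n ω α : ℕ) =
      #{β | parkingKey (andersonK m n ω) β < parkingKey (andersonK m n ω) α} := by
  rw [← card_filter_apply_lt (andersonR_injective hcop hω)]
  simp_rw [andersonR_lt_andersonR_iff hcop hω hst]

theorem isParkingFn_andersonMap : IsParkingFn m n (andersonMap m n ω) :=
  isParkingFn_of_mul_le (andersonR_injective hcop hω) fun α => by
    have h := andersonK_mul_le hcop hω α
    rw [← Int.toNat_of_nonneg (andersonK_nonneg hcop hω hst α)] at h
    exact_mod_cast h

end Stable

section Injective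

variable [NeZero n]

theorem card_mul_andersonMin_add_sum {ω : ℤ ≃ ℤ} (hcop : m.Coprime n) (hω : IsAffinePerm n ω) :
    n * andersonMin ω + ∑ r : Fin n, (r : ℤ) * m = ∑ α, parkingKey (andersonK m n ω) α := by
  have hsum := (two_mul_sum_Icc_eq_iff ω).mp hω.2
  rw [sum_Icc_sub_eq_sum_progression_sub hcop hω.1 (andersonMin ω)] at hsum
  let e := Equiv.ofBijective _ (Finite.injective_iff_bijective.mp (andersonR_injective hcop hω.1))
  have hkey : ∑ r : Fin n, ω (andersonMin ω + r * m) = ∑ α, parkingKey (andersonK m n ω) α := by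
    rw [← e.sum_comp]
    exact sum_congr rfl fun α _ => map_andersonMin_add_andersonR hcop hω.1 α
  rw [sum_sub_distrib, hkey, sum_add_distrib] at hsum
  simp only [sum_const, card_univ, Fintype.card_fin, nsmul_eq_mul] at hsum
  linarith

theorem eq_of_map_add_mul_eq (hcop : m.Coprime n) {ω₁ ω₂ : ℤ ≃ ℤ}
    (h₁ : ∀ x, ω₁ (x + n) = ω₁ x + n) (h₂ : ∀ x, ω₂ (x + n) = ω₂ x + n) (M : ℤ)
    (h : ∀ r : Fin n, ω₁ (M + r * m) = ω₂ (M + r * m)) : ω₁ = ω₂ := Equiv.ext fun x => by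
  obtain ⟨r, k, rfl⟩ := exists_eq_add_mul_sub_mul hcop M x
  rw [sub_eq_add_neg, ← neg_mul, map_add_mul h₁, map_add_mul h₂, h]

theorem andersonMap_injective (hcop : m.Coprime n) {ω₁ ω₂ : ℤ ≃ ℤ}
    (h₁ : IsAffinePerm n ω₁ ∧ IsMStable m ω₁) (h₂ : IsAffinePerm n ω₂ ∧ IsMStable m ω₂)
    (h : andersonMap m n ω₁ = andersonMap m n ω₂) : ω₁ = ω₂ := by
  have hk : andersonK m n ω₁ = andersonK m n ω₂ := funext fun α => by
    rw [← Int.toNat_of_nonneg (andersonK_nonneg hcop h₁.1.1 h₁.2 α),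
      ← Int.toNat_of_nonneg (andersonK_nonneg hcop h₂.1.1 h₂.2 α)]
    exact congrArg _ (congrFun h α)
  have hr : andersonR m n ω₁ = andersonR m n ω₂ := funext fun α => Fin.ext <| by
    rw [andersonR_eq_card hcop h₁.1.1 h₁.2, andersonR_eq_card hcop h₂.1.1 h₂.2, hk]
  have hM : andersonMin ω₁ = andersonMin ω₂ := by
    have e₁ := card_mul_andersonMin_add_sum hcop h₁.1
    have e₂ := card_mul_andersonMin_add_sum hcop h₂.1
    rw [hk] at e₁
    exact mul_left_cancel₀ (a := (n : ℤ)) (by exact_mod_cast NeZero.ne n) (by linarith)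
  refine eq_of_map_add_mul_eq hcop h₁.1.1 h₂.1.1 (andersonMin ω₁) fun r => ?_
  obtain ⟨α, rfl⟩ := (Finite.injective_iff_surjective.mp (andersonR_injective hcop h₁.1.1)) r
  calc ω₁ (andersonMin ω₁ + andersonR m n ω₁ α * m) = parkingKey (andersonK m n ω₁) α :=
        map_andersonMin_add_andersonR hcop h₁.1.1 α
    _ = ω₂ (andersonMin ω₂ + andersonR m n ω₂ α * m) := by
        rw [hk, map_andersonMin_add_andersonR hcop h₂.1.1 α]
    _ = ω₂ (andersonMin ω₁ + andersonR m n ω₁ α * m) := by rw [hM, hr]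

end Injective

theorem two_dvd_mul_of_coprime (hcop : m.Coprime n) : (2 : ℤ) ∣ (n - 1) * (1 - m) := by
  rcases Nat.even_or_odd n with ⟨a, ha⟩ | ⟨a, ha⟩
  · rcases Nat.even_or_odd m with ⟨b, hb⟩ | ⟨b, hb⟩
    · have h2 := Nat.dvd_gcd (show 2 ∣ m by omega) (show 2 ∣ n by omega)
      rw [hcop.gcd_eq_one] at h2
      omega
    · exact ⟨-(n - 1) * b, by rw [hb]; push_cast; ring⟩
  · exact ⟨a * (1 - m), by rw [ha]; push_cast; ring⟩

theorem one_le_parkingKey {k : Fin n → ℤ} (hk0 : ∀ α, 0 ≤ k α) (α : Fin n) :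
    1 ≤ parkingKey k α := by
  have := mul_nonneg (hk0 α) (Nat.cast_nonneg (α := ℤ) n)
  rw [parkingKey]
  omega

theorem parkingKey_le {k : Fin n → ℤ} (hkm : ∀ α, k α < m) (α : Fin n) :
    parkingKey k α ≤ m * n := by
  have hkα : k α * n ≤ (m - 1) * n :=
    mul_le_mul_of_nonneg_right (by linarith [hkm α]) (by positivity)
  have := α.isLt
  rw [parkingKey]
  linarith

theorem parkingKey_lt_of_lt {k : Fin n → ℤ} {α β : Fin n} (h : k β < k α) :
    parkingKey k β < parkingKey k α := by
  have hkβ : k β * n ≤ (k α - 1) * n :=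
    mul_le_mul_of_nonneg_right (by linarith) (by positivity)
  have := β.isLt
  rw [parkingKey, parkingKey]
  linarith

section Construction

variable (k : Fin n → ℤ)

noncomputable def sortedKey : Fin n → ℤ := parkingKey k ∘ Tuple.sort (parkingKey k)

theorem sortedKey_strictMono : StrictMono (sortedKey k) :=
  (Tuple.monotone_sort _).strictMono_of_injective
    ((parkingKey_injective k).comp (Tuple.sort _).injective)

theorem card_filter_parkingKey_lt (r : Fin n) :
    #{β | parkingKey k β < sortedKey k r} = r := by
  set π := Tuple.sort (parkingKey k)
  have hkey : ∀ β, parkingKey k β = sortedKey k (π.symm β) := fun β => by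
    simp [sortedKey, π]
  have := card_filter_apply_lt π.symm.injective (π r)
  simp only [Equiv.symm_apply_apply] at this
  simp_rw [hkey, (sortedKey_strictMono k).lt_iff_lt]
  exact this

theorem mul_le_of_lt_sortedKey (hpark : ∀ α, k α * n ≤ m * #{β | k β < k α}) {r : Fin n}
    {j : ℤ} (h : j * n < sortedKey k r) : j * n ≤ r * m := by
  set α := Tuple.sort (parkingKey k) r
  have hcard : #{β | k β < k α} ≤ r := by
    rw [← card_filter_parkingKey_lt k r]
    refine card_le_card fun β hβ => ?_
    simp only [mem_filter, mem_univ, true_and] at hβ ⊢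
    exact parkingKey_lt_of_lt hβ
  have hj : j ≤ k α := by
    have := α.isLt
    have : j * n < (k α + 1) * n := by
      change j * n < parkingKey k α at h
      rw [parkingKey] at h
      linarith
    exact Int.lt_add_one_iff.mp (lt_of_mul_lt_mul_right this (by positivity))
  have hjn : j * n ≤ k α * n := mul_le_mul_of_nonneg_right hj (by positivity)
  have hmr : (m : ℤ) * #{β | k β < k α} ≤ m * r := by exact_mod_cast Nat.mul_le_mul_left m hcard
  linarith [hpark α]

-- Chosen so that `2 * ∑ i ∈ Icc 1 n, ω i = n * (n + 1)`; the division is exact by coprimality.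
variable (m) in
def andersonInvMin : ℤ := ∑ α, k α + (n - 1) * (1 - m) / 2 + 1

variable [NeZero n]

variable (m) in
noncomputable def andersonInvFun (x : ℤ) : ℤ :=
  sortedKey k (rCoeff m n (x - andersonInvMin m k)) - kCoeff m n (x - andersonInvMin m k) * n

variable {k} (hcop : m.Coprime n)
include hcop

theorem andersonInvFun_apply (r : Fin n) (j : ℤ) :
    andersonInvFun m k (andersonInvMin m k + r * m - j * n) = sortedKey k r - j * n := by
  obtain ⟨hr, hj⟩ := rCoeff_kCoeff_eq hcop (r := r) (k := j)
    (x := andersonInvMin m k + r * m - j * n - andersonInvMin m k) (by ring)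
  rw [andersonInvFun, hr, hj]

theorem andersonInvFun_add (x : ℤ) : andersonInvFun m k (x + n) = andersonInvFun m k x + n := by
  obtain ⟨r, j, rfl⟩ := exists_eq_add_mul_sub_mul hcop (andersonInvMin m k) x
  rw [show andersonInvMin m k + r * m - j * n + n = andersonInvMin m k + r * m - (j - 1) * n by
    ring, andersonInvFun_apply hcop, andersonInvFun_apply hcop]
  ring

theorem andersonInvFun_intCast_eq {x y : ℤ}
    (h : (andersonInvFun m k x : ZMod n) = andersonInvFun m k y) : (x : ZMod n) = y := by
  obtain ⟨r, j, rfl⟩ := exists_eq_add_mul_sub_mul hcop (andersonInvMin m k) x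
  obtain ⟨r', j', rfl⟩ := exists_eq_add_mul_sub_mul hcop (andersonInvMin m k) y
  rw [andersonInvFun_apply hcop, andersonInvFun_apply hcop] at h
  have hr : r = r' := (Tuple.sort _).injective <| natCast_fin_injective <| by
    simpa [sortedKey, parkingKey] using h
  subst hr
  simp

theorem andersonInvFun_lt_add (hk0 : ∀ α, 0 ≤ k α) (hkm : ∀ α, k α < m) (x : ℤ) :
    andersonInvFun m k x < andersonInvFun m k (x + m) := by
  obtain ⟨r, j, rfl⟩ := exists_eq_add_mul_sub_mul hcop (andersonInvMin m k) x
  by_cases hr : (r : ℕ) + 1 < n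
  · rw [show andersonInvMin m k + r * m - j * n + m =
        andersonInvMin m k + (⟨r + 1, hr⟩ : Fin n) * m - j * n by push_cast; ring,
      andersonInvFun_apply hcop, andersonInvFun_apply hcop]
    have := sortedKey_strictMono k (show r < ⟨r + 1, hr⟩ from Fin.lt_def.mpr (by simp))
    linarith
  · -- `r = n - 1` wraps around to `r = 0`; since `k < m`, all keys lie in `[1, m * n]`.
    have hr' : (r : ℤ) = n - 1 := by have := r.isLt; omega
    rw [show andersonInvMin m k + r * m - j * n + m =
        andersonInvMin m k + ((0 : Fin n) : ℕ) * m - (j - m) * n by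
          rw [Fin.val_zero, hr']; push_cast; ring,
      andersonInvFun_apply hcop, andersonInvFun_apply hcop]
    have hlow : 1 ≤ sortedKey k 0 := one_le_parkingKey hk0 _
    have hhigh : sortedKey k r ≤ m * n := parkingKey_le hkm _
    linarith

theorem isLeast_andersonInvMin (hk0 : ∀ α, 0 ≤ k α)
    (hpark : ∀ α, k α * n ≤ m * #{β | k β < k α}) :
    IsLeast {i | 0 < andersonInvFun m k i} (andersonInvMin m k) := by
  refine ⟨?_, fun i hi => ?_⟩
  · have h := andersonInvFun_apply hcop (k := k) 0 0
    simp only [Fin.val_zero, Nat.cast_zero, zero_mul, add_zero, sub_zero] at h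
    show 0 < andersonInvFun m k (andersonInvMin m k)
    rw [h]
    exact one_le_parkingKey hk0 _
  obtain ⟨r, j, rfl⟩ := exists_eq_add_mul_sub_mul hcop (andersonInvMin m k) i
  change 0 < andersonInvFun m k _ at hi
  rw [andersonInvFun_apply hcop] at hi
  have := mul_le_of_lt_sortedKey k hpark (r := r) (j := j) (by linarith)
  show andersonInvMin m k ≤ andersonInvMin m k + r * m - j * n
  linarith

theorem two_mul_sum_andersonInvFun :
    2 * ∑ i ∈ Icc (1 : ℤ) n, andersonInvFun m k i = n * (n + 1) := by
  rw [two_mul_sum_Icc_eq_iff,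
    sum_Icc_sub_eq_sum_progression_sub hcop (andersonInvFun_add hcop) (andersonInvMin m k)]
  have happ : ∀ r : Fin n, andersonInvFun m k (andersonInvMin m k + r * m) = sortedKey k r :=
    fun r => by simpa using andersonInvFun_apply hcop (k := k) r 0
  have hsorted : ∑ r, sortedKey k r = ∑ α, parkingKey k α := Equiv.sum_comp (Tuple.sort _) _
  simp only [happ, sum_sub_distrib, sum_add_distrib, hsorted, parkingKey, ← sum_mul,
    sum_const, card_univ, Fintype.card_fin, nsmul_eq_mul, mul_one]
  obtain ⟨c, hc⟩ := two_dvd_mul_of_coprime hcop (m := m) (n := n)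
  have hM : andersonInvMin m k = ∑ α, k α + c + 1 := by
    rw [andersonInvMin, hc, Int.mul_ediv_cancel_left _ two_ne_zero]
  have h := two_mul_sum_fin (n := n)
  rw [hM]
  have : 2 * ((∑ i : Fin n, (i : ℤ)) + n + (∑ α, k α) * n -
      (n * (∑ α, k α + c + 1) + (∑ r : Fin n, (r : ℤ)) * m)) = 0 := by
    linear_combination (1 - (m : ℤ)) * h + (n : ℤ) * hc
  omega

end Construction

theorem exists_andersonMap_eq [NeZero n] (hm : 0 < m) (hcop : m.Coprime n) {f : Fin n → ℕ}
    (hf : IsParkingFn m n f) :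
    ∃ ω : ℤ ≃ ℤ, (IsAffinePerm n ω ∧ IsMStable m ω) ∧ andersonMap m n ω = f := by
  set k : Fin n → ℤ := fun α => f α with hk
  have hk0 : ∀ α, 0 ≤ k α := fun α => Nat.cast_nonneg _
  have hkm : ∀ α, k α < m := fun α => Int.ofNat_lt.mpr (hf.apply_lt_s7 hm α)
  have hpark : ∀ α, k α * n ≤ m * #{β | k β < k α} := fun α => by
    simp only [hk, Nat.cast_lt]
    exact_mod_cast hf.mul_le_card hm α
  let ω := Equiv.ofBijective _
    (bijective_of_map_add (andersonInvFun_add hcop (k := k)) fun _ _ => andersonInvFun_intCast_eq hcop)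
  have hω : ∀ x, ω (x + n) = ω x + n := andersonInvFun_add hcop
  have hmin : andersonMin ω = andersonInvMin m k :=
    (isLeast_andersonMin hω).unique (isLeast_andersonInvMin hcop hk0 hpark)
  refine ⟨ω, ⟨⟨hω, two_mul_sum_andersonInvFun hcop⟩, andersonInvFun_lt_add hcop hk0 hkm⟩,
    funext fun α => ?_⟩
  set r := (Tuple.sort (parkingKey k)).symm α
  have hωr : ω (andersonInvMin m k + r * m - k α * n) = α + 1 := by
    change andersonInvFun m k _ = _
    rw [andersonInvFun_apply hcop]
    simp [sortedKey, r, parkingKey]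
  have hdec : (r : ℤ) * m - k α * n = ω.symm (α + 1) - andersonMin ω := by
    rw [hmin, ← hωr, ω.symm_apply_apply]; ring
  rw [andersonMap, andersonK, (rCoeff_kCoeff_eq hcop hdec).2]
  simp [k]

end Anderson

/-- The Anderson map `A` is a bijection from `m`-stable affine permutations to
`m/n`-parking functions: with `M_ω = min{i : ω(i) > 0}` and the unique
decomposition `ω⁻¹(α) - M_ω = r·m - k·n` with `0 ≤ r < n`, one has `k ≥ 0` and
`A_ω(α) = k`. -/
theorem stmt_7 (m n : ℕ) (hm : 0 < m) (hn : 0 < n) (hcop : Nat.Coprime m n) :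
    ∃ A : {ω : ℤ ≃ ℤ // IsAffinePerm n ω ∧ IsMStable m ω} →
          {f : Fin n → ℕ // IsParkingFn m n f},
      Function.Bijective A ∧
      ∀ (ω : {ω : ℤ ≃ ℤ // IsAffinePerm n ω ∧ IsMStable m ω})
        (α : Fin n) (M r k : ℤ),
        0 < ω.1 M → (∀ i : ℤ, 0 < ω.1 i → M ≤ i) →
        0 ≤ r → r < n →
        ω.1.symm ((α : ℤ) + 1) - M = r * m - k * n →
        0 ≤ k ∧ ((A ω).1 α : ℤ) = k := by
  have : NeZero n := ⟨hn.ne'⟩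
  refine ⟨fun ω => ⟨Anderson.andersonMap m n ω.1, Anderson.isParkingFn_andersonMap hcop ω.2.1.1 ω.2.2⟩,
    ⟨fun ω₁ ω₂ h => Subtype.ext (Anderson.andersonMap_injective hcop ω₁.2 ω₂.2 (congrArg Subtype.val h)),
      fun f => ?_⟩, ?_⟩
  · obtain ⟨ω, hω, hωf⟩ := Anderson.exists_andersonMap_eq hm hcop f.2
    exact ⟨⟨ω, hω⟩, Subtype.ext hωf⟩
  intro ω α M r k hMpos hMmin hr0 hrn hdec
  have hM : M = Anderson.andersonMin ω.1 := IsLeast.unique ⟨hMpos, hMmin⟩ (Anderson.isLeast_andersonMin ω.2.1.1)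
  have hk : Anderson.andersonK m n ω.1 α = k := by
    refine (Anderson.rCoeff_kCoeff_eq hcop (r := ⟨r.toNat, by omega⟩) ?_).2
    rw [← hM, hdec, Fin.val_mk, Int.toNat_of_nonneg hr0]
  have hk0 := Anderson.andersonK_nonneg hcop ω.2.1.1 ω.2.2 α
  exact ⟨hk ▸ hk0, by rw [← hk]; exact Int.toNat_of_nonneg hk0⟩
end

section
/- In the setting of the Anderson map: for ω m-stable, α ∈ {1,...,n}, and the unique decomposition ω^{-1}(α) - M_ω = rm - kn with r ∈ {0,...,n-1}, the integer k is nonnegative. -/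
/-! Write `ω⁻¹(α) = M + r m - k n`. By periodicity `ω (M + r m) = α + k n`, and by `m`-stability
`ω (M + r m) ≥ ω M > 0`. Since `α ≤ n`, this forces `(k + 1) n > 0`, i.e. `k ≥ 0`. -/

theorem map_add_mul_of_map_add_s8 {f : ℤ → ℤ} {p : ℤ} (h : ∀ x, f (x + p) = f x + p) (x c : ℤ) :
    f (x + c * p) = f x + c * p := by
  simpa using AddConstMapClass.map_add_zsmul (⟨f, h⟩ : AddConstMap ℤ ℤ p p) x c

theorem strictMono_add_mul_of_lt_map_add {α : Type*} [Preorder α] {f : ℤ → α} {m : ℤ}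
    (h : ∀ x, f x < f (x + m)) (x : ℤ) : StrictMono fun j : ℤ => f (x + j * m) :=
  strictMono_int_of_lt_succ fun j => by simpa [add_mul, add_assoc] using h (x + j * m)

theorem stmt_8_general (m n : ℕ)
    (ω : ℤ ≃ ℤ)
    (hper : ∀ x : ℤ, ω (x + n) = ω x + n)
    (hst : ∀ x : ℤ, ω x < ω (x + m))
    (M : ℤ) (hM1 : 0 < ω M)
    (α : ℤ) (hα2 : α ≤ (n : ℤ))
    (r k : ℤ) (hr0 : 0 ≤ r)
    (hdec : ω.symm α - M = r * m - k * n) :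
    0 ≤ k := by
  have hval : ω (M + r * m) = α + k * n := by
    rw [show M + r * m = ω.symm α + k * n by linarith, map_add_mul_of_map_add_s8 hper,
      Equiv.apply_symm_apply]
  have hmono : ω M ≤ ω (M + r * m) := by
    simpa using (strictMono_add_mul_of_lt_map_add hst M).monotone hr0
  have hprod : 0 < (k + 1) * n := by linarith
  linarith [pos_of_mul_pos_left hprod n.cast_nonneg]

/-- In the Anderson construction, for `ω` `m`-stable with minimal positive-value
position `M`, `α ∈ {1,…,n}`, and `ω⁻¹(α) - M = r·m - k·n` with `0 ≤ r < n`,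
the integer `k` is nonnegative. -/
theorem stmt_8 (m n : ℕ) (hm : 0 < m) (hn : 0 < n) (hcop : Nat.Coprime m n)
    (ω : ℤ ≃ ℤ)
    (hper : ∀ x : ℤ, ω (x + n) = ω x + n)
    (hsum : 2 * ∑ i ∈ Finset.Icc (1 : ℤ) (n : ℤ), ω i = n * (n + 1))
    (hst : ∀ x : ℤ, ω x < ω (x + m))
    (M : ℤ) (hM1 : 0 < ω M) (hM2 : ∀ i : ℤ, 0 < ω i → M ≤ i)
    (α : ℤ) (hα1 : 1 ≤ α) (hα2 : α ≤ (n : ℤ))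
    (r k : ℤ) (hr0 : 0 ≤ r) (hrn : r < n)
    (hdec : ω.symm α - M = r * m - k * n) :
    0 ≤ k :=
  stmt_8_general m n ω hper hst M hM1 α hα2 r k hr0 hdec
end

section
/- For every m-stable affine permutation ω, the function PS_ω(α) := #{β : β > α, 0 < ω^{-1}(α) - ω^{-1}(β) < m} restricted to α ∈ {1,...,n} is an m/n-parking function. -/
/-!
Read `PS_ω` in positions: for `x = ω⁻¹ α` it counts the `z ∈ (x - m, x)` with `ω z > ω x`.
In a window `W` of `m` consecutive positions, "number of elements of `W` above `ω x`" is a rank,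
hence a bijection `W → {0, …, m - 1}`, so exactly `ℓ` positions of `W` have fewer than `ℓ`
larger values in `W`. By `m`-stability this in-window count dominates `PS`, so every window
contains at least `ℓ` positions with `PS < ℓ`. Summing over the `n` windows starting in one
period, `n`-periodicity makes every residue class mod `n` appear exactly `m` times, which gives
`ℓ n ≤ m · #{α : PS_ω(α) < ℓ}`.
-/

open Finset Function

section CountAbove

variable {α β : Type*} [LinearOrder β] {f : α → β} {s : Finset α} {x y : α}

def countAbove (f : α → β) (s : Finset α) (x : α) : ℕ := #{z ∈ s | f x < f z}

lemma countAbove_lt_countAbove (hy : y ∈ s) (h : f x < f y) :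
    countAbove f s y < countAbove f s x := by
  refine card_lt_card <| (ssubset_iff_of_subset <|
    monotone_filter_right _ fun z _ hz => h.trans hz).mpr ⟨y, ?_, ?_⟩
  · simpa [hy] using h
  · simp

lemma countAbove_injOn (hf : Set.InjOn f s) : Set.InjOn (countAbove f s) s := by
  intro x hx y hy hxy
  rcases lt_trichotomy (f x) (f y) with h | h | h
  · exact absurd hxy (countAbove_lt_countAbove hy h).ne'
  · exact hf hx hy h
  · exact absurd hxy (countAbove_lt_countAbove hx h).ne

lemma countAbove_lt_card (hx : x ∈ s) : countAbove f s x < #s :=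
  card_lt_card (filter_ssubset.mpr ⟨x, hx, lt_irrefl _⟩)

lemma image_countAbove (hf : Set.InjOn f s) : s.image (countAbove f s) = range #s :=
  eq_of_subset_of_card_le
    (image_subset_iff.mpr fun _ hx => mem_range.mpr (countAbove_lt_card hx))
    (by rw [card_range, card_image_of_injOn (countAbove_injOn hf)])

lemma card_filter_countAbove_lt (hf : Set.InjOn f s) {ℓ : ℕ} (hℓ : ℓ ≤ #s) :
    #{x ∈ s | countAbove f s x < ℓ} = ℓ := by
  rw [← card_image_of_injOn ((countAbove_injOn hf).mono (filter_subset _ _)),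
    ← filter_image (p := (· < ℓ)), image_countAbove hf]
  have : {v ∈ range #s | v < ℓ} = range ℓ := by
    ext v; simp only [mem_filter, mem_range]; omega
  rw [this, card_range]

end CountAbove

section Window

variable {β : Type*} [LinearOrder β] {f : ℤ → β} {m : ℕ}

noncomputable def inversionsWithin (f : ℤ → β) (m : ℕ) (x : ℤ) : ℕ :=
  countAbove f (Ioo (x - m) x) x

lemma inversionsWithin_le_countAbove (hst : ∀ z, f z < f (z + m)) {t x : ℤ}
    (hx : x ∈ Ioc t (t + m)) : inversionsWithin f m x ≤ countAbove f (Ioc t (t + m)) x := by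
  rw [mem_Ioc] at hx
  unfold inversionsWithin countAbove
  -- positions left of the window are moved into it by `+ m`, which only raises their value
  refine card_le_card_of_injOn (fun z => if z ≤ t then z + m else z) ?_ ?_
  · intro z hz
    simp only [coe_filter, mem_Ioo, mem_Ioc, Set.mem_ofPred_eq] at hz ⊢
    split_ifs with hzt
    · exact ⟨⟨by omega, by omega⟩, hz.2.trans (hst z)⟩
    · exact ⟨⟨by omega, by omega⟩, hz.2⟩
  · intro z hz z' hz' h
    simp only [coe_filter, mem_Ioo, Set.mem_ofPred_eq] at hz hz' h
    split_ifs at h <;> omega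

lemma le_card_filter_inversionsWithin_lt (hf : Injective f) (hst : ∀ z, f z < f (z + m))
    {ℓ : ℕ} (hℓ : ℓ ≤ m) (t : ℤ) :
    ℓ ≤ #{x ∈ Ioc t (t + m) | inversionsWithin f m x < ℓ} :=
  calc ℓ = #{x ∈ Ioc t (t + m) | countAbove f (Ioc t (t + m)) x < ℓ} :=
        (card_filter_countAbove_lt hf.injOn (by simpa using hℓ)).symm
    _ ≤ _ := card_le_card <| monotone_filter_right _ fun _ hx h =>
        (inversionsWithin_le_countAbove hst hx).trans_lt h

lemma inversionsWithin_periodic {f : ℤ → ℤ} {n : ℤ} (hper : ∀ z, f (z + n) = f z + n) :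
    Periodic (inversionsWithin f m) n := by
  intro x
  have : Ioo (x + n - m) (x + n) = (Ioo (x - m) x).map (addRightEmbedding n) := by
    rw [map_add_right_Ioo, sub_add_eq_add_sub]
  simp only [inversionsWithin, countAbove, this, filter_map, card_map]
  congr 2
  ext z
  simp [hper]

end Window

section Periodic

variable {M : Type*} [AddCommMonoid M] {n : ℕ}

lemma Function.Periodic.apply_val_intCast {γ : Type*} [NeZero n] {F : ℤ → γ}
    (hF : Periodic F n) (x : ℤ) : F (x : ZMod n).val = F x := by
  rw [ZMod.val_intCast, Int.emod_def, mul_comm]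
  exact hF.sub_int_mul_eq _

lemma intCast_apply_eq_of_intCast_eq {e : ℤ → ℤ} (he : ∀ x, e (x + n) = e x + n) {x y : ℤ}
    (h : (x : ZMod n) = y) : (e x : ZMod n) = e y := by
  obtain ⟨k, hk⟩ := (ZMod.intCast_eq_intCast_iff_dvd_sub x y n).mp h
  have hP : Periodic (fun x => e x - x) n := fun x => by simp only [he]; ring
  have hy : y = x + k * n := by linarith
  have := hP.int_mul k x
  rw [Int.cast_id] at this
  rw [ZMod.intCast_eq_intCast_iff_dvd_sub]
  exact ⟨k, by rw [hy]; linarith⟩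

lemma Fin.intCast_zmod_injective : Injective fun i : Fin n => ((i : ℤ) : ZMod n) := by
  intro i j h
  dsimp only at h
  simp only [Int.cast_natCast, ZMod.natCast_eq_natCast_iff', Nat.mod_eq_of_lt i.isLt,
    Nat.mod_eq_of_lt j.isLt] at h
  exact Fin.ext h

lemma sum_comp_eq_sum_zmod [NeZero n] {F : ℤ → M} (hF : Periodic F n) {g : Fin n → ℤ}
    (hg : Injective fun i => (g i : ZMod n)) : ∑ i, F (g i) = ∑ a : ZMod n, F a.val :=
  Fintype.sum_bijective _ ((Fintype.bijective_iff_injective_and_card _).mpr ⟨hg, by simp⟩) _ _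
    fun i => (hF.apply_val_intCast (g i)).symm

lemma sum_sum_Ioc_eq_nsmul [NeZero n] {F : ℤ → M} (hF : Periodic F n) (m : ℕ) :
    ∑ t : Fin n, ∑ x ∈ Ioc (t : ℤ) (t + m), F x = m • ∑ a : ZMod n, F a.val := by
  have hshift : ∀ t : ℤ, Ioc t (t + m) = (Ioc 0 (m : ℤ)).map (addLeftEmbedding t) := by
    simp
  simp_rw [hshift, sum_map]
  rw [sum_comm]
  have hinj : ∀ j : ℤ, Injective fun t : Fin n => (addLeftEmbedding (t : ℤ) j : ZMod n) := by
    intro j t t' h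
    simp only [addLeftEmbedding_apply, Int.cast_add, add_left_inj] at h
    exact Fin.intCast_zmod_injective h
  rw [sum_congr rfl fun j _ => sum_comp_eq_sum_zmod hF (hinj j), sum_const, Int.card_Ioc]
  simp

end Periodic

lemma mul_le_mul_card_filter_inversionsWithin_lt {m n : ℕ} [NeZero n] {f : ℤ → ℤ}
    (hf : Injective f) (hper : ∀ z, f (z + n) = f z + n) (hst : ∀ z, f z < f (z + m))
    {g : Fin n → ℤ} (hg : Injective fun i => (g i : ZMod n)) {ℓ : ℕ} (hℓ : ℓ ≤ m) :
    ℓ * n ≤ m * #{i | inversionsWithin f m (g i) < ℓ} := by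
  have hP : Periodic (fun x => if inversionsWithin f m x < ℓ then 1 else 0) n :=
    (inversionsWithin_periodic hper).comp fun k => if k < ℓ then 1 else 0
  calc ℓ * n = ∑ _t : Fin n, ℓ := by simp [mul_comm]
    _ ≤ ∑ t : Fin n, #{x ∈ Ioc (t : ℤ) (t + m) | inversionsWithin f m x < ℓ} :=
        sum_le_sum fun t _ => le_card_filter_inversionsWithin_lt hf hst hℓ t
    _ = m * #{i | inversionsWithin f m (g i) < ℓ} := by
        simp_rw [card_filter]
        rw [sum_sum_Ioc_eq_nsmul hP, smul_eq_mul, sum_comp_eq_sum_zmod hP hg]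

lemma ncard_setOf_eq_inversionsWithin (ω : ℤ ≃ ℤ) (m : ℕ) (y : ℤ) :
    {β : ℤ | y < β ∧ 0 < ω.symm y - ω.symm β ∧ ω.symm y - ω.symm β < m}.ncard =
      inversionsWithin ω m (ω.symm y) := by
  have : {β : ℤ | y < β ∧ 0 < ω.symm y - ω.symm β ∧ ω.symm y - ω.symm β < m} =
      ω '' ↑{z ∈ Ioo (ω.symm y - m) (ω.symm y) | ω (ω.symm y) < ω z} := by
    ext β
    rw [Set.mem_image_equiv]
    simp only [Equiv.apply_symm_apply, coe_filter, mem_Ioo, Set.mem_ofPred_eq]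
    omega
  rw [this, Set.ncard_image_of_injective _ ω.injective, Set.ncard_coe_finset]
  rfl

theorem stmt_10_general (m n : ℕ) (hn : 0 < n)
    (ω : ℤ ≃ ℤ)
    (hper : ∀ x : ℤ, ω (x + n) = ω x + n)
    (hst : ∀ x : ℤ, ω x < ω (x + m)) :
    ∀ ℓ : ℕ, 0 < ℓ → ℓ ≤ m →
      ℓ * n ≤ m * {α : Fin n |
        {β : ℤ | (α : ℤ) + 1 < β ∧
          0 < ω.symm ((α : ℤ) + 1) - ω.symm β ∧
          ω.symm ((α : ℤ) + 1) - ω.symm β < m}.ncard < ℓ}.ncard := by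
  intro ℓ _ hℓ
  have : NeZero n := ⟨hn.ne'⟩
  have hg : Injective fun α : Fin n => (ω.symm ((α : ℤ) + 1) : ZMod n) := by
    intro a b h
    have := intCast_apply_eq_of_intCast_eq hper h
    simp only [Equiv.apply_symm_apply, Int.cast_add, add_left_inj] at this
    exact Fin.intCast_zmod_injective this
  simp_rw [ncard_setOf_eq_inversionsWithin, Set.ncard_eq_toFinset_card', Set.toFinset_ofPred]
  exact mul_le_mul_card_filter_inversionsWithin_lt ω.injective hper hst hg hℓ

/-- For every `m`-stable affine permutation `ω`, the function
`PS_ω(α) = #{β > α : 0 < ω⁻¹(α) - ω⁻¹(β) < m}` on `{1,…,n}` is an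
`m/n`-parking function. -/
theorem stmt_10 (m n : ℕ) (hm : 0 < m) (hn : 0 < n) (hcop : Nat.Coprime m n)
    (ω : ℤ ≃ ℤ)
    (hper : ∀ x : ℤ, ω (x + n) = ω x + n)
    (hsum : 2 * ∑ i ∈ Finset.Icc (1 : ℤ) (n : ℤ), ω i = n * (n + 1))
    (hst : ∀ x : ℤ, ω x < ω (x + m)) :
    ∀ ℓ : ℕ, 0 < ℓ → ℓ ≤ m →
      ℓ * n ≤ m * {α : Fin n |
        {β : ℤ | (α : ℤ) + 1 < β ∧
          0 < ω.symm ((α : ℤ) + 1) - ω.symm β ∧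
          ω.symm ((α : ℤ) + 1) - ω.symm β < m}.ncard < ℓ}.ncard :=
  stmt_10_general m n hn ω hper hst
end

section
/- Let ω be an m-restricted affine permutation and define SP_ω(i) = #{j > i : 0 < ω(i) - ω(j) < m} for i ∈ ℤ. Then for 1 ≤ i ≤ n: ω(i) < ω(i+1) if and only if SP_ω(i) ≤ SP_ω(i+1). -/
/-!
Substituting `v = ω j`, `SP_ω(s)` counts the values `v` in the window `(ω s - m, ω s]` whose
position `ω⁻¹ v` lies beyond `s`. Being `m`-restricted says exactly that `ω⁻¹ v < ω⁻¹ (v + m)`,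
so sliding the window one step to the right (dropping `v - m`, adding `v`) never lowers the count,
and sliding it by `m` to the right of a value at the threshold raises it. With `a = ω i`, `b = ω (i+1)` and the
threshold `i + 1`, we get `SP_ω(i) = N(a) + [a - m < b < a]` and `SP_ω(i+1) = N(b)` for the
monotone window count `N`; the case `b < a` splits into `a - b < m` and `a - b > m`, since
`a - b = m` is excluded.
-/

/-- `SP_ω(i) = #{j > i : 0 < ω(i) - ω(j) < m}`. -/
noncomputable def SP (m : ℕ) (ω : ℤ → ℤ) (i : ℤ) : ℕ :=
  {j : ℤ | i < j ∧ 0 < ω i - ω j ∧ ω i - ω j < (m : ℤ)}.ncard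

open Finset

noncomputable def windowCount (g : ℤ → ℤ) (m : ℕ) (t y : ℤ) : ℕ :=
  #(Ioc (y - m) y |>.filter fun v => t < g v)

section windowCount

variable (g : ℤ → ℤ) (m : ℕ) (t : ℤ)

theorem windowCount_add_one_add (y : ℤ) :
    windowCount g m t (y + 1) + (if t < g (y + 1 - m) then 1 else 0) =
      windowCount g m t y + (if t < g (y + 1) then 1 else 0) := by
  have hright : Ioc (y - m) (y + 1) = insert (y + 1) (Ioc (y - m) y) :=
    (insert_Ioc_right_eq_Ioc_add_one (by omega)).symm
  have hleft : Ioc (y - m) (y + 1) = insert (y + 1 - m) (Ioc (y + 1 - m) (y + 1)) := by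
    rw [show y + 1 - m = y - m + 1 by ring, insert_Ioc_add_one_left_eq_Ioc (by omega)]
  have hsum := congrArg (fun s => ∑ v ∈ s, if t < g v then 1 else 0) (hleft.symm.trans hright)
  simp only [sum_insert (show y + 1 ∉ Ioc (y - m) y by simp),
    sum_insert (show y + 1 - m ∉ Ioc (y + 1 - m) (y + 1) by simp)] at hsum
  simp only [windowCount, card_filter]
  omega

variable {g m}

theorem windowCount_monotone (hg : ∀ v, g v < g (v + m)) : Monotone (windowCount g m t) := by
  refine monotone_int_of_le_succ fun y => ?_
  have hstep := windowCount_add_one_add g m t y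
  have hshift := hg (y + 1 - m)
  rw [sub_add_cancel] at hshift
  split_ifs at hstep <;> omega

theorem windowCount_lt_add (hg : ∀ v, g v < g (v + m)) {y : ℤ} (hy : g y ≤ t)
    (ht : t < g (y + m)) : windowCount g m t y < windowCount g m t (y + m) := by
  have hm : m ≠ 0 := by
    rintro rfl
    simp only [Nat.cast_zero, add_zero] at ht
    omega
  have hstep := windowCount_add_one_add g m t (y + m - 1)
  rw [sub_add_cancel, add_sub_cancel_right, if_neg hy.not_gt, if_pos ht] at hstep
  have hmono := windowCount_monotone t hg (show y ≤ y + m - 1 by omega)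
  omega

end windowCount

theorem windowCount_symm_eq_add (e : ℤ ≃ ℤ) (m : ℕ) (t y : ℤ) :
    windowCount e.symm m t y =
      windowCount e.symm m (t + 1) y + if e (t + 1) ∈ Ioc (y - m) y then 1 else 0 := by
  simp only [windowCount, card_filter, ← sum_ite_eq' (Ioc (y - m) y) (e (t + 1)) fun _ => 1,
    ← sum_add_distrib]
  refine sum_congr rfl fun v _ => ?_
  have hv : v = e (t + 1) ↔ e.symm v = t + 1 := e.symm_apply_eq.symm
  simp only [hv]
  split_ifs <;> omega

theorem SP_eq_windowCount (m : ℕ) (ω : ℤ ≃ ℤ) (s : ℤ) :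
    SP m ω s = windowCount ω.symm m s (ω s) := by
  have hset : {j : ℤ | s < j ∧ 0 < ω s - ω j ∧ ω s - ω j < (m : ℤ)} =
      ω.symm '' ↑({v ∈ Ioc (ω s - m) (ω s) | s < ω.symm v}) := by
    ext j
    have hinj : ω j = ω s ↔ j = s := ω.injective.eq_iff
    simp only [Equiv.image_symm_eq_preimage, Set.mem_preimage, coe_filter, mem_Ioc,
      Equiv.symm_apply_apply, Set.mem_ofPred_eq]
    constructor
    · rintro ⟨hj, hlo, hhi⟩
      exact ⟨⟨by omega, by omega⟩, hj⟩
    · rintro ⟨⟨hlo, hhi⟩, hj⟩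
      exact ⟨hj, by omega, by omega⟩
  rw [SP, hset, Set.ncard_image_of_injective _ ω.symm.injective, Set.ncard_coe_finset,
    windowCount]

theorem Equiv.symm_lt_symm_add_of_restricted {m : ℕ} (hm : 0 < m) (ω : ℤ ≃ ℤ)
    (hres : ∀ i j : ℤ, i < j → ω i - ω j ≠ (m : ℤ)) (v : ℤ) :
    ω.symm v < ω.symm (v + m) := by
  by_contra! hle
  have hne : ω.symm (v + m) ≠ ω.symm v := fun h => by
    have := ω.symm.injective h
    omega
  have := hres _ _ (lt_of_le_of_ne hle hne)
  simp only [Equiv.apply_symm_apply] at this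
  omega

theorem stmt_11_general (n m : ℕ) (hm : 0 < m) (ω : ℤ ≃ ℤ)
    (hres : ∀ i j : ℤ, i < j → ω i - ω j ≠ (m : ℤ)) :
    ∀ i : ℤ, 1 ≤ i → i ≤ (n : ℤ) →
      (ω i < ω (i + 1) ↔ SP m ω i ≤ SP m ω (i + 1)) := by
  intro i _ _
  set N := windowCount ω.symm m (i + 1)
  have hstep := ω.symm_lt_symm_add_of_restricted hm hres
  have hmono : Monotone N := windowCount_monotone _ hstep
  have hSP : SP m ω i = N (ω i) + if ω (i + 1) ∈ Ioc (ω i - m) (ω i) then 1 else 0 := by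
    rw [SP_eq_windowCount, windowCount_symm_eq_add]
  have hSP_succ : SP m ω (i + 1) = N (ω (i + 1)) := SP_eq_windowCount m ω (i + 1)
  rcases lt_trichotomy (ω i) (ω (i + 1)) with hlt | heq | hgt
  · have hout : ω (i + 1) ∉ Ioc (ω i - m) (ω i) := by simp only [mem_Ioc]; omega
    simpa [hlt, hSP, hSP_succ, hout] using hmono hlt.le
  · exact absurd (ω.injective heq) (by omega)
  · refine iff_of_false hgt.not_gt (not_le.mpr ?_)
    rcases (hres i (i + 1) (by omega)).lt_or_gt with hnear | hfar
    · have hin : ω (i + 1) ∈ Ioc (ω i - m) (ω i) := by simp only [mem_Ioc]; omega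
      rw [hSP, hSP_succ, if_pos hin]
      exact Nat.lt_succ_of_le (hmono hgt.le)
    · have hat : ω.symm (ω (i + 1)) = i + 1 := ω.symm_apply_apply _
      calc SP m ω (i + 1) = N (ω (i + 1)) := hSP_succ
        _ < N (ω (i + 1) + m) :=
          windowCount_lt_add _ hstep hat.le (hat.symm.trans_lt (hstep _))
        _ ≤ N (ω i) := hmono (by omega)
        _ ≤ SP m ω i := hSP ▸ Nat.le_add_right _ _

/-- For an `m`-restricted affine permutation `ω` and `1 ≤ i ≤ n`:
`ω(i) < ω(i+1)` iff `SP_ω(i) ≤ SP_ω(i+1)`. -/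
theorem stmt_11 (n m : ℕ) (hn : 0 < n) (hm : 0 < m) (ω : ℤ ≃ ℤ)
    (hper : ∀ x : ℤ, ω (x + n) = ω x + n)
    (hsum : 2 * ∑ i ∈ Finset.Icc (1 : ℤ) (n : ℤ), ω i = n * (n + 1))
    (hres : ∀ i j : ℤ, i < j → ω i - ω j ≠ (m : ℤ)) :
    ∀ i : ℤ, 1 ≤ i → i ≤ (n : ℤ) →
      (ω i < ω (i + 1) ↔ SP m ω i ≤ SP m ω (i + 1)) :=
  stmt_11_general n m hm ω hres
end

section
/- Let ω be an m-restricted affine permutation, SP_ω(i) = #{j > i : 0 < ω(i) - ω(j) < m}. If 1 ≤ i ≤ n, i < j, and ω(i) > ω(j), then SP_ω(i) > SP_ω(j). -/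
theorem Int.ModEq.eq_of_abs_sub_lt {m a b : ℤ} (h : a ≡ b [ZMOD m]) (hab : |a - b| < m) :
    a = b :=
  Int.eq_of_sub_eq_zero (Int.eq_zero_of_abs_lt_dvd (Int.ModEq.dvd h.symm) hab)

/-- The representative of `v` modulo `m` in `[c - m, c)`. -/
def liftBelow (m c v : ℤ) : ℤ := c - 1 - (c - 1 - v) % m

section LiftBelow

variable {m : ℤ} (c v : ℤ)

theorem liftBelow_eq_add_mul : liftBelow m c v = v + m * ((c - 1 - v) / m) := by
  rw [liftBelow, Int.emod_def]
  ring

theorem liftBelow_modEq : liftBelow m c v ≡ v [ZMOD m] := by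
  simp [Int.ModEq, liftBelow_eq_add_mul]

theorem liftBelow_mem_Ico (hm : 0 < m) : liftBelow m c v ∈ Set.Ico (c - m) c := by
  have h₀ := Int.emod_nonneg (c - 1 - v) hm.ne'
  have h₁ := Int.emod_lt_of_pos (c - 1 - v) hm
  simp only [liftBelow, Set.mem_Ico]
  omega

theorem le_liftBelow (hm : 0 < m) (hv : v < c) : v ≤ liftBelow m c v := by
  rw [liftBelow_eq_add_mul]
  exact le_add_of_nonneg_right (mul_nonneg hm.le (Int.ediv_nonneg (by omega) hm.le))

end LiftBelow

def IsRestricted (m : ℤ) (ω : ℤ → ℤ) : Prop :=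
  ∀ i j : ℤ, i < j → ω i - ω j ≠ m

namespace IsRestricted

variable {m : ℤ} {ω : ℤ ≃ ℤ}

theorem symm_lt_symm_add (hm : m ≠ 0) (h : IsRestricted m ω) (v : ℤ) :
    ω.symm v < ω.symm (v + m) := by
  rcases lt_trichotomy (ω.symm v) (ω.symm (v + m)) with hlt | heq | hgt
  · exact hlt
  · exact absurd (by simpa using congrArg ω heq) hm
  · exact absurd (by simp) (h _ _ hgt)

theorem symm_le_symm_of_modEq (hm : 0 < m) (h : IsRestricted m ω) {a b : ℤ} (hab : a ≤ b)
    (hmod : a ≡ b [ZMOD m]) : ω.symm a ≤ ω.symm b := by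
  obtain ⟨t, ht⟩ := hmod.dvd
  have ht₀ : 0 ≤ t := (mul_nonneg_iff_of_pos_left hm).mp (ht ▸ sub_nonneg.mpr hab)
  lift t to ℕ using ht₀
  have hmono : StrictMono fun s : ℕ => ω.symm (a + m * s) :=
    strictMono_nat_of_lt_succ fun s => by
      simpa [mul_add, add_assoc] using h.symm_lt_symm_add hm.ne' (a + m * s)
  simpa [← ht] using hmono.monotone (Nat.zero_le t)

end IsRestricted

def spSet (m : ℕ) (ω : ℤ → ℤ) (i : ℤ) : Set ℤ :=
  {j : ℤ | i < j ∧ 0 < ω i - ω j ∧ ω i - ω j < (m : ℤ)}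

section SPSet

variable {m : ℕ} {ω : ℤ ≃ ℤ}

theorem SP_eq_ncard_spSet (i : ℤ) : SP m ω i = (spSet m ω i).ncard := rfl

theorem spSet_finite (i : ℤ) : (spSet m ω i).Finite := by
  refine ((Set.finite_Ioo (ω i - m) (ω i)).image ω.symm).subset ?_
  rintro k ⟨-, hk₁, hk₂⟩
  exact ⟨ω k, ⟨by omega, by omega⟩, ω.symm_apply_apply k⟩

theorem symm_liftBelow_mem_spSet (hm : 0 < m) (hres : IsRestricted m ω) {i v : ℤ}
    (hv : v < ω i) (hi : i < ω.symm v) :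
    ω.symm (liftBelow m (ω i) v) ∈ spSet m ω i := by
  have hm' : (0 : ℤ) < m := by exact_mod_cast hm
  set w := liftBelow m (ω i) v
  have hiw : i < ω.symm w := hi.trans_le <|
    hres.symm_le_symm_of_modEq hm' (le_liftBelow _ _ hm' hv) (liftBelow_modEq _ _).symm
  have hw := liftBelow_mem_Ico (ω i) v hm'
  have hne := hres i (ω.symm w) hiw
  simp only [Set.mem_Ico, Equiv.apply_symm_apply] at hw hne
  refine ⟨hiw, ?_, ?_⟩ <;> simp only [Equiv.apply_symm_apply] <;> omega

theorem SP_lt_SP (hm : 0 < m) (hres : IsRestricted m ω) {i j : ℤ} (hij : i < j)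
    (hlt : ω j < ω i) : SP m ω j < SP m ω i := by
  have hm' : (0 : ℤ) < m := by exact_mod_cast hm
  have hwindow : ∀ k ∈ insert j (spSet m ω j), j ≤ k ∧ ω j - m < ω k ∧ ω k ≤ ω j := by
    rintro k (rfl | ⟨hk, hk₁, hk₂⟩) <;> omega
  have hmaps : ∀ k ∈ insert j (spSet m ω j),
      ω.symm (liftBelow m (ω i) (ω k)) ∈ spSet m ω i := by
    intro k hk
    obtain ⟨hjk, -, hk⟩ := hwindow k hk
    exact symm_liftBelow_mem_spSet hm hres (by omega) (by simpa using hij.trans_le hjk)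
  have hinj : Set.InjOn (fun k => ω.symm (liftBelow m (ω i) (ω k))) (insert j (spSet m ω j)) := by
    intro k hk k' hk' heq
    obtain ⟨-, hk₁, hk₂⟩ := hwindow k hk
    obtain ⟨-, hk₁', hk₂'⟩ := hwindow k' hk'
    have hlift : liftBelow m (ω i) (ω k) = liftBelow m (ω i) (ω k') := ω.symm.injective heq
    have hmod : ω k ≡ ω k' [ZMOD m] :=
      (liftBelow_modEq _ _).symm.trans (hlift ▸ liftBelow_modEq (ω i) (ω k'))
    exact ω.injective (hmod.eq_of_abs_sub_lt (abs_lt.mpr ⟨by omega, by omega⟩))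
  have hj : j ∉ spSet m ω j := fun h => lt_irrefl j h.1
  rw [SP_eq_ncard_spSet, SP_eq_ncard_spSet, Nat.lt_iff_add_one_le,
    ← Set.ncard_insert_of_notMem hj (spSet_finite j)]
  exact Set.ncard_le_ncard_of_injOn _ hmaps hinj (spSet_finite i)

end SPSet

theorem stmt_12_general (n m : ℕ) (hm : 0 < m) (ω : ℤ ≃ ℤ)
    (hres : ∀ i j : ℤ, i < j → ω i - ω j ≠ (m : ℤ)) :
    ∀ i j : ℤ, 1 ≤ i → i ≤ (n : ℤ) → i < j → ω j < ω i →
      SP m ω j < SP m ω i :=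
  fun _ _ _ _ hij hlt => SP_lt_SP hm hres hij hlt

/-- For an `m`-restricted affine permutation `ω`: if `1 ≤ i ≤ n`, `i < j` and
`ω(i) > ω(j)`, then `SP_ω(i) > SP_ω(j)`. -/
theorem stmt_12 (n m : ℕ) (hn : 0 < n) (hm : 0 < m) (ω : ℤ ≃ ℤ)
    (hper : ∀ x : ℤ, ω (x + n) = ω x + n)
    (hsum : 2 * ∑ i ∈ Finset.Icc (1 : ℤ) (n : ℤ), ω i = n * (n + 1))
    (hres : ∀ i j : ℤ, i < j → ω i - ω j ≠ (m : ℤ)) :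
    ∀ i j : ℤ, 1 ≤ i → i ≤ (n : ℤ) → i < j → ω j < ω i →
      SP m ω j < SP m ω i :=
  stmt_12_general n m hm ω hres
end

section
/- Let ω be m-restricted with 0 < ω(i) - ω(i+1) < m, and set u = ω s_i (so u swaps the values at positions congruent to i and i+1 mod n). Then SP_u(i) = SP_ω(i+1), SP_u(i+1) = SP_ω(i) - 1, and SP_u(j) = SP_ω(j) for j not congruent to i or i+1 mod n, where SP_ω(i) = #{j > i : 0 < ω(i) - ω(j) < m}. -/
open Function

section SP

variable {s f : ℤ → ℤ} {m : ℕ} {b : ℤ}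

theorem SP_comp_of_involutive (hs : Involutive s) :
    SP m (f ∘ s) (s b) = {k | s b < s k ∧ 0 < f b - f k ∧ f b - f k < m}.ncard := by
  rw [SP, ← Set.ncard_preimage_of_injective_subset_range hs.injective
    (by simp [hs.surjective.range_eq])]
  congr 1
  ext k
  simp [hs _]

theorem SP_comp_of_involutive_of_lt_iff (hs : Involutive s)
    (h : ∀ k, 0 < f b - f k → f b - f k < m → (s b < s k ↔ b < k)) :
    SP m (f ∘ s) (s b) = SP m f b := by
  rw [SP_comp_of_involutive hs, SP]
  congr 1
  ext k
  exact ⟨fun ⟨hk, h₀, h₁⟩ => ⟨(h k h₀ h₁).1 hk, h₀, h₁⟩,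
    fun ⟨hk, h₀, h₁⟩ => ⟨(h k h₀ h₁).2 hk, h₀, h₁⟩⟩

theorem setOf_SP_finite (hf : Injective f) :
    {j | b < j ∧ 0 < f b - f j ∧ f b - f j < m}.Finite :=
  ((Set.finite_Ioo (f b - m) (f b)).preimage hf.injOn).subset
    fun _ ⟨_, h₀, h₁⟩ => ⟨by omega, by omega⟩

end SP

def affineSwap (n : ℕ) (i x : ℤ) : ℤ :=
  if (x : ZMod n) = i then x + 1 else if (x : ZMod n) = i + 1 then x - 1 else x

section affineSwap

variable {n : ℕ} {i x y : ℤ}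

theorem affineSwap_of_eq (h : (x : ZMod n) = i) : affineSwap n i x = x + 1 :=
  if_pos h

theorem affineSwap_of_eq_add_one [Nontrivial (ZMod n)] (h : (x : ZMod n) = i + 1) :
    affineSwap n i x = x - 1 := by
  have hx : (x : ZMod n) ≠ i := by simp [h]
  rw [affineSwap, if_neg hx, if_pos h]

theorem affineSwap_of_ne (h₀ : (x : ZMod n) ≠ i) (h₁ : (x : ZMod n) ≠ i + 1) :
    affineSwap n i x = x := by
  rw [affineSwap, if_neg h₀, if_neg h₁]

theorem affineSwap_le_self (h : (x : ZMod n) ≠ i) : affineSwap n i x ≤ x := by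
  rw [affineSwap, if_neg h]
  split_ifs <;> simp

theorem self_le_affineSwap (h : (x : ZMod n) ≠ i + 1) : x ≤ affineSwap n i x := by
  rw [affineSwap]
  split_ifs <;> simp

theorem affineSwap_involutive [Nontrivial (ZMod n)] : Involutive (affineSwap n i) := by
  intro x
  by_cases h₀ : (x : ZMod n) = i
  · rw [affineSwap_of_eq h₀, affineSwap_of_eq_add_one (by push_cast; rw [h₀])]
    ring
  by_cases h₁ : (x : ZMod n) = i + 1
  · rw [affineSwap_of_eq_add_one h₁, affineSwap_of_eq (by push_cast; rw [h₁]; ring)]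
    ring
  rw [affineSwap_of_ne h₀ h₁, affineSwap_of_ne h₀ h₁]

theorem affineSwap_lt_affineSwap [Nontrivial (ZMod n)] (hxy : x < y)
    (hadj : ¬((x : ZMod n) = i ∧ y = x + 1)) : affineSwap n i x < affineSwap n i y := by
  by_cases hx : (x : ZMod n) = i
  · have hy : y ≠ x + 1 := fun hy => hadj ⟨hx, hy⟩
    rw [affineSwap_of_eq hx]
    by_cases hy₁ : (y : ZMod n) = i + 1
    · have : y ≠ x + 2 := by
        rintro rfl
        push_cast at hy₁
        exact one_ne_zero (α := ZMod n) (by linear_combination hy₁ - hx)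
      rw [affineSwap_of_eq_add_one hy₁]
      omega
    · have := self_le_affineSwap hy₁
      omega
  · have := affineSwap_le_self hx
    by_cases hy₁ : (y : ZMod n) = i + 1
    · have : y ≠ x + 1 := by
        rintro rfl
        push_cast at hy₁
        exact hx (add_right_cancel hy₁)
      rw [affineSwap_of_eq_add_one hy₁]
      omega
    · have := self_le_affineSwap hy₁
      omega

theorem affineSwap_lt_affineSwap_iff [Nontrivial (ZMod n)]
    (hxy : ¬((x : ZMod n) = i ∧ y = x + 1)) (hyx : ¬((y : ZMod n) = i ∧ x = y + 1)) :
    affineSwap n i x < affineSwap n i y ↔ x < y := by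
  refine ⟨fun h => ?_, fun h => affineSwap_lt_affineSwap h hxy⟩
  by_contra! hle
  rcases hle.lt_or_eq with hlt | rfl
  · exact (affineSwap_lt_affineSwap hlt hyx).asymm h
  · exact lt_irrefl _ h

theorem SP_comp_affineSwap_of_ne [Nontrivial (ZMod n)] {f : ℤ → ℤ} {m : ℕ} {j : ℤ}
    (h₀ : (j : ZMod n) ≠ i) (h₁ : (j : ZMod n) ≠ i + 1) :
    SP m (f ∘ affineSwap n i) j = SP m f j := by
  calc SP m (f ∘ affineSwap n i) j
      = SP m (f ∘ affineSwap n i) (affineSwap n i j) := by rw [affineSwap_of_ne h₀ h₁]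
    _ = SP m f j := SP_comp_of_involutive_of_lt_iff affineSwap_involutive fun k _ _ =>
        affineSwap_lt_affineSwap_iff (fun h => h₀ h.1)
          fun ⟨hk, hjk⟩ => h₁ (by simp [hjk, hk])

theorem SP_comp_affineSwap_self [Nontrivial (ZMod n)] {f : ℤ → ℤ} {m : ℕ}
    (h : f (i + 1) ≤ f i) : SP m (f ∘ affineSwap n i) i = SP m f (i + 1) := by
  have hi₁ : affineSwap n i (i + 1) = i := by
    rw [affineSwap_of_eq_add_one (by push_cast; rfl)]
    ring
  calc SP m (f ∘ affineSwap n i) i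
      = SP m (f ∘ affineSwap n i) (affineSwap n i (i + 1)) := by rw [hi₁]
    _ = SP m f (i + 1) := SP_comp_of_involutive_of_lt_iff affineSwap_involutive fun k hk _ =>
        affineSwap_lt_affineSwap_iff (by simp)
          (by rintro ⟨-, hki⟩; rw [show k = i by omega] at hk; omega)

theorem SP_comp_affineSwap_add_one [Nontrivial (ZMod n)] {f : ℤ → ℤ} {m : ℕ}
    (hf : Injective f) (h₀ : f (i + 1) < f i) (h₁ : f i - f (i + 1) < m) :
    SP m (f ∘ affineSwap n i) (i + 1) + 1 = SP m f i := by
  have hi : affineSwap n i i = i + 1 := affineSwap_of_eq rfl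
  have hmem : i + 1 ∈ {k | i < k ∧ 0 < f i - f k ∧ f i - f k < m} :=
    ⟨by omega, by omega, h₁⟩
  rw [← hi, SP_comp_of_involutive affineSwap_involutive, hi, SP,
    ← Set.ncard_sdiff_singleton_add_one hmem (setOf_SP_finite hf)]
  congr 2
  ext k
  simp only [Set.mem_ofPred_eq, Set.mem_sdiff, Set.mem_singleton_iff]
  by_cases hk : k = i + 1
  · simp [hk, affineSwap_of_eq_add_one]
  have hlt := affineSwap_lt_affineSwap_iff (n := n) (i := i) (x := i) (fun h => hk h.2)
    fun ⟨hki, hik⟩ => by simp [hik] at hki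
  rw [hi] at hlt
  rw [hlt]
  tauto

end affineSwap

theorem stmt_14_general (n m : ℕ) (ω : ℤ ≃ ℤ)
    (hper : ∀ x : ℤ, ω (x + n) = ω x + n)
    (i : ℤ) (h1 : 0 < ω i - ω (i + 1)) (h2 : ω i - ω (i + 1) < (m : ℤ))
    (s : ℤ → ℤ)
    (hs : ∀ x : ℤ, s x =
      if x % n = i % n then x + 1
      else if x % n = (i + 1) % n then x - 1 else x) :
    SP m (⇑ω ∘ s) i = SP m (⇑ω) (i + 1) ∧
    SP m (⇑ω ∘ s) (i + 1) + 1 = SP m (⇑ω) i ∧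
    (∀ j : ℤ, j % n ≠ i % n → j % n ≠ (i + 1) % n →
      SP m (⇑ω ∘ s) j = SP m (⇑ω) j) := by
  have hn : n ≠ 1 := by
    rintro rfl
    have := hper i
    push_cast at this
    omega
  have : Nontrivial (ZMod n) := ZMod.nontrivial_iff.2 hn
  simp only [ne_eq, ← ZMod.intCast_eq_intCast_iff', Int.cast_add, Int.cast_one] at hs ⊢
  obtain rfl : s = affineSwap n i := funext hs
  exact ⟨SP_comp_affineSwap_self (by omega),
    SP_comp_affineSwap_add_one ω.injective (by omega) h2, fun _ => SP_comp_affineSwap_of_ne⟩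

/-- Let `ω` be `m`-restricted with `0 < ω(i) - ω(i+1) < m`, and `u = ω ∘ sᵢ`
where `sᵢ` swaps `i + tn ↔ i + 1 + tn`. Then `SP_u(i) = SP_ω(i+1)`,
`SP_u(i+1) = SP_ω(i) - 1`, and `SP_u(j) = SP_ω(j)` for `j ≢ i, i+1 (mod n)`. -/
theorem stmt_14 (n m : ℕ) (hn : 0 < n) (hm : 0 < m) (ω : ℤ ≃ ℤ)
    (hper : ∀ x : ℤ, ω (x + n) = ω x + n)
    (hsum : 2 * ∑ i ∈ Finset.Icc (1 : ℤ) (n : ℤ), ω i = n * (n + 1))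
    (hres : ∀ a b : ℤ, a < b → ω a - ω b ≠ (m : ℤ))
    (i : ℤ) (h1 : 0 < ω i - ω (i + 1)) (h2 : ω i - ω (i + 1) < (m : ℤ))
    (s : ℤ → ℤ)
    (hs : ∀ x : ℤ, s x =
      if x % n = i % n then x + 1
      else if x % n = (i + 1) % n then x - 1 else x) :
    SP m (⇑ω ∘ s) i = SP m (⇑ω) (i + 1) ∧
    SP m (⇑ω ∘ s) (i + 1) + 1 = SP m (⇑ω) i ∧
    (∀ j : ℤ, j % n ≠ i % n → j % n ≠ (i + 1) % n →
      SP m (⇑ω ∘ s) j = SP m (⇑ω) j) :=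
  stmt_14_general n m ω hper i h1 h2 s hs
end

section
/- Let ω be m-restricted with m < ω(i) - ω(i+1), and u = ω s_i. Then SP_u(i) = SP_ω(i+1), SP_u(i+1) = SP_ω(i), and SP_u(j) = SP_ω(j) for j not congruent to i, i+1 mod n. -/
/-!
`s_i` is an involution, so `k ↦ s_i k` is a bijection between the sets counted by `SP_u(j)`
and by `SP_ω(s_i j)` as soon as it respects the constraint `k > j` on them. It does: `s_i` moves
every integer by at most one, and the only pair `j < k` whose order it reverses is `(i, i + 1)`,
which drops out of both counts since `ω(i + 1) - ω(i) < 0` and `ω(i) - ω(i + 1) > m`.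
-/

open Function

/-- The affine simple transposition `s_i`, swapping the residue classes of `i` and `i + 1`. -/
def affineTransposition (n : ℕ) (i x : ℤ) : ℤ :=
  if x % n = i % n then x + 1 else if x % n = (i + 1) % n then x - 1 else x

theorem SP_comp_of_involutive_s15 {m : ℕ} {ω s : ℤ → ℤ} (hs : Involutive s) {a b : ℤ}
    (hab : s a = b)
    (hfwd : ∀ j, a < j → 0 < ω b - ω (s j) → ω b - ω (s j) < m → b < s j)
    (hbwd : ∀ k, b < k → 0 < ω b - ω k → ω b - ω k < m → a < s k) :
    SP m (ω ∘ s) a = SP m ω b := by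
  have hpre : {j | a < j ∧ 0 < ω (s a) - ω (s j) ∧ ω (s a) - ω (s j) < m} =
      s ⁻¹' {k | b < k ∧ 0 < ω b - ω k ∧ ω b - ω k < m} := by
    ext j
    simp only [hab, Set.mem_ofPred_eq, Set.mem_preimage]
    constructor
    · rintro ⟨hj, hpos, hlt⟩
      exact ⟨hfwd j hj hpos hlt, hpos, hlt⟩
    · rintro ⟨hj, hpos, hlt⟩
      refine ⟨?_, hpos, hlt⟩
      simpa only [hs j] using hbwd (s j) hj hpos hlt
  rw [SP, Function.comp_def, hpre, SP]
  exact Set.ncard_preimage_of_injective_subset_range hs.injective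
    (by simp [hs.surjective.range_eq])

section affineTransposition

variable {n : ℕ} {i : ℤ}

theorem emod_ne_emod_add_one (hn : n ≠ 1) : i % n ≠ (i + 1) % n := by
  intro h
  have h1 : (n : ℤ) ∣ 1 := by simpa using Int.ModEq.dvd h
  exact hn (Nat.dvd_one.mp (by exact_mod_cast h1))

theorem affineTransposition_of_ne (x : ℤ) (h₁ : x % n ≠ i % n) (h₂ : x % n ≠ (i + 1) % n) :
    affineTransposition n i x = x := by
  simp [affineTransposition, h₁, h₂]

theorem affineTransposition_of_emod_eq_left {x : ℤ} (h : x % n = i % n) :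
    affineTransposition n i x = x + 1 := by
  simp [affineTransposition, h]

theorem affineTransposition_of_emod_eq_right (hn : n ≠ 1) {x : ℤ} (h : x % n = (i + 1) % n) :
    affineTransposition n i x = x - 1 := by
  simp [affineTransposition, h, (emod_ne_emod_add_one hn).symm]

theorem affineTransposition_self : affineTransposition n i i = i + 1 :=
  affineTransposition_of_emod_eq_left rfl

theorem affineTransposition_add_one (hn : n ≠ 1) : affineTransposition n i (i + 1) = i := by
  simpa using affineTransposition_of_emod_eq_right hn rfl

theorem affineTransposition_involutive (hn : n ≠ 1) : Involutive (affineTransposition n i) := by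
  intro x
  by_cases hx₁ : x % n = i % n
  · have hx : (x + 1) % n = (i + 1) % n := Int.ModEq.add_right 1 hx₁
    rw [affineTransposition_of_emod_eq_left hx₁, affineTransposition_of_emod_eq_right hn hx]
    ring
  by_cases hx₂ : x % n = (i + 1) % n
  · have hx : x - 1 ≡ i [ZMOD n] := by simpa using Int.ModEq.sub_right 1 hx₂
    rw [affineTransposition_of_emod_eq_right hn hx₂, affineTransposition_of_emod_eq_left hx]
    ring
  rw [affineTransposition_of_ne x hx₁ hx₂, affineTransposition_of_ne x hx₁ hx₂]

theorem sub_one_le_affineTransposition (x : ℤ) : x - 1 ≤ affineTransposition n i x := by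
  unfold affineTransposition
  split_ifs <;> omega

theorem lt_affineTransposition {a k : ℤ} (ha : a % n ≠ i % n) (hk : a < k) :
    a < affineTransposition n i k := by
  unfold affineTransposition
  split_ifs with h₁ h₂
  · omega
  · have : k ≠ a + 1 := by
      rintro rfl
      exact ha (Int.ModEq.add_right_cancel' 1 h₂)
    omega
  · exact hk

theorem add_one_lt_affineTransposition (hn : n ≠ 1) {j : ℤ} (hj : i < j) (hj' : j ≠ i + 1) :
    i + 1 < affineTransposition n i j := by
  unfold affineTransposition
  split_ifs with h₁ h₂
  · omega
  · have hn0 : n ≠ 0 := by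
      rintro rfl
      exact hj' (by simpa using h₂)
    have := Int.le_of_dvd (by omega) (Int.ModEq.dvd h₂.symm)
    omega
  · omega

end affineTransposition

theorem stmt_15_general (n m : ℕ) (ω : ℤ ≃ ℤ)
    (hper : ∀ x : ℤ, ω (x + n) = ω x + n)
    (i : ℤ) (h1 : (m : ℤ) < ω i - ω (i + 1))
    (s : ℤ → ℤ)
    (hs : ∀ x : ℤ, s x =
      if x % n = i % n then x + 1
      else if x % n = (i + 1) % n then x - 1 else x) :
    SP m (⇑ω ∘ s) i = SP m (⇑ω) (i + 1) ∧
    SP m (⇑ω ∘ s) (i + 1) = SP m (⇑ω) i ∧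
    (∀ j : ℤ, j % n ≠ i % n → j % n ≠ (i + 1) % n →
      SP m (⇑ω ∘ s) j = SP m (⇑ω) j) := by
  obtain rfl : s = affineTransposition n i := funext hs
  have hn1 : n ≠ 1 := by
    rintro rfl
    have := hper i
    push_cast at this
    omega
  have hinv := affineTransposition_involutive (i := i) hn1
  refine ⟨?_, ?_, fun j hj₁ hj₂ => ?_⟩
  · refine SP_comp_of_involutive_s15 hinv affineTransposition_self (fun j hj hpos _ => ?_)
      (fun k hk _ _ => by linarith [sub_one_le_affineTransposition (n := n) (i := i) k])
    refine add_one_lt_affineTransposition hn1 hj ?_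
    rintro rfl
    rw [affineTransposition_add_one hn1] at hpos
    omega
  · refine SP_comp_of_involutive_s15 hinv (affineTransposition_add_one hn1)
      (fun j hj _ _ => by linarith [sub_one_le_affineTransposition (n := n) (i := i) j])
      (fun k hk _ hlt => add_one_lt_affineTransposition hn1 hk ?_)
    rintro rfl
    omega
  · exact SP_comp_of_involutive_s15 hinv (affineTransposition_of_ne j hj₁ hj₂)
      (fun k hk _ _ => lt_affineTransposition hj₁ hk)
      (fun k hk _ _ => lt_affineTransposition hj₁ hk)

/-- Let `ω` be `m`-restricted with `m < ω(i) - ω(i+1)`, and `u = ω ∘ sᵢ`.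
Then `SP_u(i) = SP_ω(i+1)`, `SP_u(i+1) = SP_ω(i)`, and `SP_u(j) = SP_ω(j)`
for `j ≢ i, i+1 (mod n)`. -/
theorem stmt_15 (n m : ℕ) (hn : 0 < n) (hm : 0 < m) (ω : ℤ ≃ ℤ)
    (hper : ∀ x : ℤ, ω (x + n) = ω x + n)
    (hsum : 2 * ∑ i ∈ Finset.Icc (1 : ℤ) (n : ℤ), ω i = n * (n + 1))
    (hres : ∀ a b : ℤ, a < b → ω a - ω b ≠ (m : ℤ))
    (i : ℤ) (h1 : (m : ℤ) < ω i - ω (i + 1))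
    (s : ℤ → ℤ)
    (hs : ∀ x : ℤ, s x =
      if x % n = i % n then x + 1
      else if x % n = (i + 1) % n then x - 1 else x) :
    SP m (⇑ω ∘ s) i = SP m (⇑ω) (i + 1) ∧
    SP m (⇑ω ∘ s) (i + 1) = SP m (⇑ω) i ∧
    (∀ j : ℤ, j % n ≠ i % n → j % n ≠ (i + 1) % n →
      SP m (⇑ω ∘ s) j = SP m (⇑ω) j) :=
  stmt_15_general n m ω hper i h1 s hs
end

section
/- The number of finite m-stable permutations in S_n equals the multinomial coefficient n! / (n_1! n_2! ... n_m!), where n_i = floor((n-i)/m) + 1 if i ≤ n and n_i = 0 otherwise. -/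
/-!
Stability says exactly that `ω` is increasing on every residue class mod `m`, a partition of
`Fin n` into blocks of sizes `n₁, …, n_m`. Let `H ≅ ∏ S_{nᵢ}` be the group of permutations
preserving each block. A left coset `σH` is determined by the images `σ(Bᵢ)` of the blocks, and
it contains exactly one permutation that is increasing on every block: the one mapping each `Bᵢ`
monotonically onto `σ(Bᵢ)`. Hence there are `[S_n : H] = n! / ∏ nᵢ!` stable permutations.
-/

open Equiv

section Fibers

variable {α β ι : Type*}

def StrictMonoOnFibers [Preorder α] [Preorder β] (c : α → ι) (f : α → β) : Prop :=
  ∀ i, StrictMonoOn f (c ⁻¹' {i})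

def Equiv.Perm.fiberStabilizer (c : α → ι) : Subgroup (Perm α) where
  carrier := {g | c ∘ g = c}
  mul_mem' {g h} hg hh := by
    change c ∘ g ∘ h = c
    rw [← Function.comp_assoc, hg, hh]
  one_mem' := rfl
  inv_mem' {g} hg := by
    change c ∘ g.symm = c
    conv_lhs => rw [← hg, Function.comp_assoc, g.self_comp_symm, Function.comp_id]

variable [LinearOrder α]

theorem StrictMonoOnFibers.eq_of_comp_eq [WellFoundedLT α] {c f : α → ι}
    {ω₁ ω₂ : Perm α} (hω₁ : StrictMonoOnFibers c ω₁) (hω₂ : StrictMonoOnFibers c ω₂)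
    (h₁ : f ∘ ω₁ = c) (h₂ : f ∘ ω₂ = c) : ω₁ = ω₂ := by
  have hrange : ∀ ω : Perm α, f ∘ ω = c → ∀ i,
      Set.range (fun x : c ⁻¹' {i} => ω x) = f ⁻¹' {i} := by
    intro ω h i
    change Set.range (ω ∘ Subtype.val) = _
    rw [Set.range_comp, Subtype.range_coe, ← h, Set.preimage_comp,
      Set.image_preimage_eq _ ω.surjective]
  ext x
  have hmono : ∀ ω : Perm α, StrictMonoOnFibers c ω →
      StrictMono (fun y : c ⁻¹' {c x} => ω y) :=
    fun ω hω y z hyz => hω (c x) y.2 z.2 hyz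
  have hfiber := (hmono ω₁ hω₁).range_inj (hmono ω₂ hω₂) |>.mp
    ((hrange ω₁ h₁ (c x)).trans (hrange ω₂ h₂ (c x)).symm)
  exact congrFun hfiber ⟨x, rfl⟩

theorem exists_strictMonoOnFibers_comp_eq [Fintype α] [DecidableEq ι] (c f : α → ι)
    (h : ∀ i, Fintype.card {x // c x = i} = Fintype.card {x // f x = i}) :
    ∃ ω : Perm α, StrictMonoOnFibers c ω ∧ f ∘ ω = c := by
  let e : ∀ i, {x // c x = i} ≃o {x // f x = i} := fun i =>
    (Fintype.orderIsoFinOfCardEq _ rfl).symm.trans (Fintype.orderIsoFinOfCardEq _ (h i).symm)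
  have he : ∀ i (x : {x // c x = i}), ofFiberEquiv (fun i => (e i).toEquiv) x = e i x := by
    rintro i ⟨x, rfl⟩
    rfl
  refine ⟨ofFiberEquiv (fun i => (e i).toEquiv), fun i x hx y hy hxy => ?_,
    funext (ofFiberEquiv_map _)⟩
  rw [he i ⟨x, hx⟩, he i ⟨y, hy⟩]
  exact (e i).strictMono hxy

theorem card_strictMonoOnFibers_mul_prod_factorial [Fintype α] [DecidableEq α] [Fintype ι]
    [DecidableEq ι] (c : α → ι) :
    Nat.card {ω : Perm α // StrictMonoOnFibers c ω} *
      ∏ i, (Fintype.card {x // c x = i}).factorial = (Fintype.card α).factorial := by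
  let q : {ω : Perm α // StrictMonoOnFibers c ω} → Perm α ⧸ Perm.fiberStabilizer c :=
    fun ω => ω.1
  have hq : Function.Bijective q := by
    constructor
    · rintro ⟨ω₁, hω₁⟩ ⟨ω₂, hω₂⟩ h
      have h' : c ∘ ⇑(ω₁⁻¹ * ω₂) = c := QuotientGroup.eq.mp h
      exact Subtype.ext
        (hω₁.eq_of_comp_eq hω₂ (f := c ∘ ⇑ω₁⁻¹) (by simp [Function.comp_assoc]) h')
    · rintro ⟨σ⟩
      -- the fibres of `c ∘ σ⁻¹` are the block images `σ(Bᵢ)`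
      obtain ⟨ω, hω, hσ⟩ := exists_strictMonoOnFibers_comp_eq c (c ∘ ⇑σ⁻¹) fun i =>
        Fintype.card_congr (σ.subtypeEquiv fun x => by simp)
      refine ⟨⟨ω, hω⟩, QuotientGroup.eq.mpr ?_⟩
      change c ∘ ⇑(ω⁻¹ * σ) = c
      conv_lhs => rw [← hσ]
      ext x
      simp
  rw [Nat.card_eq_of_bijective q hq, ← Fintype.card_perm, ← DomMulAct.stabilizer_card,
    ← Nat.card_eq_fintype_card, ← Nat.card_eq_fintype_card]
  exact (Subgroup.card_eq_card_quotient_mul_card_subgroup _).symm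

end Fibers

section Residue

variable {n m : ℕ}

def residue (hm : 0 < m) (x : Fin n) : Fin m := ⟨x % m, Nat.mod_lt _ hm⟩

theorem strictMonoOnFibers_residue_iff {β : Type*} [Preorder β] (hm : 0 < m) (f : Fin n → β) :
    StrictMonoOnFibers (residue hm) f ↔ ∀ x y : Fin n, (y : ℕ) = x + m → f x < f y := by
  constructor
  · intro hf x y hy
    have hxy : residue hm x = residue hm y := Fin.ext (by simp [residue, hy])
    exact hf _ rfl hxy.symm (Fin.lt_def.mpr (by omega))
  · intro hstep
    have hchain : ∀ k (x y : Fin n), (y : ℕ) = x + m * (k + 1) → f x < f y := by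
      intro k
      induction k with
      | zero => exact fun x y hy => hstep x y (by simpa using hy)
      | succ k ih =>
        intro x y hy
        let z : Fin n := ⟨x + m * (k + 1), by rw [mul_add] at hy; omega⟩
        exact (ih x z rfl).trans (hstep z y (by simp only [z]; rw [hy]; ring))
    intro i x hx y hy hxy
    have hmod : (x : ℕ) % m = y % m := congrArg Fin.val (hx.trans hy.symm)
    obtain ⟨k, hk⟩ := (Nat.modEq_iff_dvd' hxy.le).mp hmod
    cases k with
    | zero => simp only [mul_zero] at hk; omega
    | succ k => exact hchain k x y (by omega)

theorem card_residue_fiber (hm : 0 < m) (r : Fin m) :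
    Fintype.card {x : Fin n // residue hm x = r} =
      if (r : ℕ) + 1 ≤ n then (n - (r + 1)) / m + 1 else 0 := by
  have hK : ∀ k, (r : ℕ) + m * k < n ↔
      k < if (r : ℕ) + 1 ≤ n then (n - (r + 1)) / m + 1 else 0 := by
    intro k
    split_ifs with h
    · rw [Nat.lt_succ_iff, Nat.le_div_iff_mul_le hm, mul_comm]
      omega
    · omega
  generalize (if (r : ℕ) + 1 ≤ n then (n - (r + 1)) / m + 1 else 0) = K at hK ⊢
  have hr : (r : ℕ) % m = r := Nat.mod_eq_of_lt r.isLt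
  have hx : ∀ x : {x : Fin n // residue hm x = r}, (r : ℕ) + m * (x.1 / m) = x.1 := fun x => by
    rw [← congrArg Fin.val x.2]
    exact Nat.mod_add_div _ _
  refine (Fintype.card_congr (β := Fin K) ⟨
    fun x => ⟨x.1 / m, (hK _).mp (by rw [hx]; exact x.1.isLt)⟩,
    fun k => ⟨⟨r + m * k, (hK k).mpr k.isLt⟩, Fin.ext (by simp [residue, hr])⟩,
    fun x => Subtype.ext (Fin.ext (hx x)),
    fun k => Fin.ext (show ((r : ℕ) + m * k) / m = k by
      rw [Nat.add_mul_div_left _ _ hm, Nat.div_eq_of_lt r.isLt, zero_add])⟩).trans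
    (Fintype.card_fin K)

end Residue

/-- The number of finite `m`-stable permutations in `S_n` (those with
`ω(x+m) > ω(x)` whenever both are defined) equals the multinomial coefficient
`n! / (n₁! ⋯ n_m!)` where `nᵢ = ⌊(n-i)/m⌋ + 1` for `i ≤ n` and `nᵢ = 0`
otherwise. -/
theorem stmt_16 (n m : ℕ) (hm : 0 < m) :
    Nat.card {ω : Equiv.Perm (Fin n) //
        ∀ x y : Fin n, (y : ℕ) = (x : ℕ) + m → ω x < ω y} =
      Nat.factorial n /
        ∏ i ∈ Finset.Icc 1 m,
          Nat.factorial (if i ≤ n then (n - i) / m + 1 else 0) := by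
  have hprod : ∏ i ∈ Finset.Icc 1 m, (if i ≤ n then (n - i) / m + 1 else 0).factorial =
      ∏ r, (Fintype.card {x : Fin n // residue hm x = r}).factorial := by
    simp only [card_residue_fiber]
    rw [Fin.prod_univ_eq_prod_range
        (fun j => (if j + 1 ≤ n then (n - (j + 1)) / m + 1 else 0).factorial),
      Finset.range_eq_Ico,
      Finset.prod_Ico_add' (fun i => (if i ≤ n then (n - i) / m + 1 else 0).factorial),
      zero_add, Finset.Ico_add_one_right_eq_Icc]
  have hcount := card_strictMonoOnFibers_mul_prod_factorial (residue (n := n) hm)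
  simp only [strictMonoOnFibers_residue_iff, Fintype.card_fin] at hcount
  rw [hprod, ← hcount, Nat.mul_div_cancel _ (by positivity)]
end

section
/- The map ω ↦ (PS_ω(1),...,PS_ω(n)), where PS_ω(α) is the number of pairs (x,y) with x < y < x+m and ω(x) > ω(y) = α, is injective on the set of finite m-stable permutations in S_n. -/
/-!
Induct on the value `α`. If `ω₁` and `ω₂` place all values below `α` at the same positions, they
share the set `O` of those positions, and `PS_ω(α)` counts the positions in the window of length
`m - 1` just before `y = ω⁻¹(α)` that are not in `O`. Stability makes `O` closed under `x ↦ x - m`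
and puts `y - m` in `O`. Moving each free position of the window of a smaller `y₁`, together with
`y₁` itself, up by multiples of `m` into the window of a larger `y₂` is then injective, so the
count strictly increases with `y`, and equal counts force `ω₁⁻¹(α) = ω₂⁻¹(α)`.
-/

open Set

/-- Positions `x ∉ O` with `x < y < x + m` (the truncated subtraction is exact for this). -/
def freeBefore (m : ℕ) (O : Set ℕ) (y : ℕ) : Set ℕ := Ico (y + 1 - m) y \ O

lemma finite_freeBefore (m : ℕ) (O : Set ℕ) (y : ℕ) : (freeBefore m O y).Finite :=
  (finite_Ico _ _).sdiff

lemma mem_of_add_mul_mem {m : ℕ} {O : Set ℕ} (hO : ∀ x, x + m ∈ O → x ∈ O) {x : ℕ} :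
    ∀ k, x + m * k ∈ O → x ∈ O
  | 0, h => by simpa using h
  | k + 1, h => mem_of_add_mul_mem hO k (hO _ (by rwa [mul_add_one, ← add_assoc] at h))

lemma ncard_freeBefore_lt {m : ℕ} (hm : 0 < m) {O : Set ℕ} (hO : ∀ x, x + m ∈ O → x ∈ O)
    {y₁ y₂ : ℕ} (hy : y₁ < y₂) (hy₁ : y₁ ∉ O) (hy₂ : m ≤ y₂ → y₂ - m ∈ O) :
    (freeBefore m O y₁).ncard < (freeBefore m O y₂).ncard := by
  set s := insert y₁ (freeBefore m O y₁)
  have hs : ∀ x ∈ s, y₁ + 1 - m ≤ x ∧ x ≤ y₁ ∧ x ∉ O := by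
    rintro x (rfl | ⟨⟨hlo, hhi⟩, hxO⟩)
    · exact ⟨by omega, le_rfl, hy₁⟩
    · exact ⟨hlo, hhi.le, hxO⟩
  -- Lift `x` by a multiple of `m` into `[y₂ - m, y₂)`; it stays outside the downward-closed `O`,
  -- which contains `y₂ - m`.
  let f : ℕ → ℕ := fun x => x + m * ((y₂ - 1 - x) / m)
  have hmaps : ∀ x ∈ s, f x ∈ freeBefore m O y₂ := by
    intro x hx
    obtain ⟨-, hxy, hxO⟩ := hs x hx
    have hfxO : f x ∉ O := fun h => hxO (mem_of_add_mul_mem hO _ h)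
    have hfx : f x = x + m * ((y₂ - 1 - x) / m) := rfl
    have := Nat.div_add_mod (y₂ - 1 - x) m
    have := Nat.mod_lt (y₂ - 1 - x) hm
    refine ⟨⟨?_, by omega⟩, hfxO⟩
    by_contra hlow
    exact hfxO (by convert hy₂ (by omega) using 1; omega)
  have hinj : InjOn f s := by
    intro a ha b hb hab
    obtain ⟨ha₁, ha₂, -⟩ := hs a ha
    obtain ⟨hb₁, hb₂, -⟩ := hs b hb
    have hmod : a ≡ b [MOD m] := by
      unfold Nat.ModEq
      rw [← Nat.add_mul_mod_self_left a m, ← Nat.add_mul_mod_self_left b m]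
      exact congrArg (· % m) hab
    exact le_antisymm (hmod.le_of_lt_add (by omega)) (hmod.symm.le_of_lt_add (by omega))
  calc (freeBefore m O y₁).ncard < s.ncard := by
        rw [ncard_insert_of_notMem (fun h => h.1.2.false) (finite_freeBefore m O y₁)]
        omega
    _ ≤ (freeBefore m O y₂).ncard := ncard_le_ncard_of_injOn f hmaps hinj (finite_freeBefore m O y₂)

section Perm

variable {n m : ℕ}

def IsStable (m : ℕ) (ω : Equiv.Perm (Fin n)) : Prop :=
  ∀ x y : Fin n, (y : ℕ) = (x : ℕ) + m → ω x < ω y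

def lowerPositions (ω : Equiv.Perm (Fin n)) (α : Fin n) : Set ℕ :=
  (fun β => (ω.symm β : ℕ)) '' Iio α

lemma val_mem_lowerPositions_iff {ω : Equiv.Perm (Fin n)} {α x : Fin n} :
    (x : ℕ) ∈ lowerPositions ω α ↔ ω x < α := by
  constructor
  · rintro ⟨β, hβ, hx⟩
    rwa [← Fin.ext hx, Equiv.apply_symm_apply]
  · exact fun h => ⟨ω x, h, by simp⟩

lemma lowerPositions_congr {ω₁ ω₂ : Equiv.Perm (Fin n)} {α : Fin n}
    (h : ∀ β < α, ω₁.symm β = ω₂.symm β) : lowerPositions ω₁ α = lowerPositions ω₂ α :=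
  image_congr fun β hβ => congrArg Fin.val (h β hβ)

lemma symm_val_notMem_lowerPositions (ω : Equiv.Perm (Fin n)) (α : Fin n) :
    (ω.symm α : ℕ) ∉ lowerPositions ω α := by
  simp [val_mem_lowerPositions_iff]

lemma mem_lowerPositions_of_add_mem {ω : Equiv.Perm (Fin n)} (hω : IsStable m ω) (α : Fin n)
    (k : ℕ) (hk : k + m ∈ lowerPositions ω α) : k ∈ lowerPositions ω α := by
  obtain ⟨β, hβ, hy : (ω.symm β : ℕ) = k + m⟩ := hk
  let x : Fin n := ⟨k, by have := (ω.symm β).isLt; omega⟩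
  have : ω x < β := by simpa using hω x (ω.symm β) hy
  exact val_mem_lowerPositions_iff.mpr (this.trans hβ)

lemma symm_val_sub_mem_lowerPositions {ω : Equiv.Perm (Fin n)} (hω : IsStable m ω) (α : Fin n)
    (hy : m ≤ (ω.symm α : ℕ)) :
    (ω.symm α : ℕ) - m ∈ lowerPositions ω α := by
  let x : Fin n := ⟨(ω.symm α : ℕ) - m, by omega⟩
  have : ω x < α := by simpa using hω x (ω.symm α) (by simp [x]; omega)
  exact val_mem_lowerPositions_iff.mpr this

lemma ncard_inversionsAt_eq (ω : Equiv.Perm (Fin n)) (α : Fin n) :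
    {p : Fin n × Fin n | p.1 < p.2 ∧ (p.2 : ℕ) < (p.1 : ℕ) + m ∧
      ω p.2 < ω p.1 ∧ ω p.2 = α}.ncard =
    (freeBefore m (lowerPositions ω α) (ω.symm α)).ncard := by
  have hsnd : ∀ p : Fin n × Fin n, ω p.2 = α ↔ p.2 = ω.symm α := fun _ => ω.eq_symm_apply.symm
  rw [← InjOn.ncard_image (f := fun p => (p.1 : ℕ))]
  · congr 1
    ext k
    simp only [mem_image, mem_ofPred_eq, hsnd, Prod.exists]
    constructor
    · rintro ⟨x, _, ⟨hxy, hwin, hlt, rfl⟩, rfl⟩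
      refine ⟨⟨by omega, hxy⟩, fun hx => ?_⟩
      exact (val_mem_lowerPositions_iff.mp hx).not_gt (by simpa using hlt)
    · rintro ⟨⟨hlo, hhi⟩, hk⟩
      let x : Fin n := ⟨k, hhi.trans (ω.symm α).isLt⟩
      have hx : ¬ ω x < α := fun h => hk (val_mem_lowerPositions_iff.mpr h)
      have hxα : ω x ≠ α := fun h => hhi.ne (congrArg Fin.val (ω.eq_symm_apply.mpr h))
      refine ⟨x, ω.symm α, ⟨hhi, show _ < k + m by omega, ?_, rfl⟩, rfl⟩
      simpa using lt_of_le_of_ne (not_lt.mp hx) (Ne.symm hxα)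
  · rintro ⟨x₁, y₁⟩ ⟨-, -, -, h₁⟩ ⟨x₂, y₂⟩ ⟨-, -, -, h₂⟩ hx
    rw [hsnd] at h₁ h₂
    simp_all [Fin.ext_iff]

end Perm

/-- The map `ω ↦ (PS_ω(1),…,PS_ω(n))`, where `PS_ω(α)` counts pairs `(x,y)`
with `x < y < x + m` and `ω(x) > ω(y) = α`, is injective on the set of finite
`m`-stable permutations in `S_n`. -/
theorem stmt_17 (n m : ℕ) (hm : 0 < m)
    (ω₁ ω₂ : Equiv.Perm (Fin n))
    (h₁ : ∀ x y : Fin n, (y : ℕ) = (x : ℕ) + m → ω₁ x < ω₁ y)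
    (h₂ : ∀ x y : Fin n, (y : ℕ) = (x : ℕ) + m → ω₂ x < ω₂ y)
    (hPS : ∀ α : Fin n,
      {p : Fin n × Fin n | p.1 < p.2 ∧ (p.2 : ℕ) < (p.1 : ℕ) + m ∧
        ω₁ p.2 < ω₁ p.1 ∧ ω₁ p.2 = α}.ncard =
      {p : Fin n × Fin n | p.1 < p.2 ∧ (p.2 : ℕ) < (p.1 : ℕ) + m ∧
        ω₂ p.2 < ω₂ p.1 ∧ ω₂ p.2 = α}.ncard) :
    ω₁ = ω₂ := by
  suffices h : ∀ α, ω₁.symm α = ω₂.symm α from Equiv.symm_bijective.injective (Equiv.ext h)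
  intro α
  induction α using WellFoundedLT.induction with
  | _ α ih =>
  have hO := lowerPositions_congr ih
  have hcount := hPS α
  rw [ncard_inversionsAt_eq, ncard_inversionsAt_eq, ← hO] at hcount
  have hdown := mem_lowerPositions_of_add_mem h₁ α
  by_contra hne
  rcases lt_or_gt_of_ne hne with hlt | hlt
  · refine (ncard_freeBefore_lt hm hdown hlt (symm_val_notMem_lowerPositions ω₁ α) ?_).ne hcount
    exact hO ▸ symm_val_sub_mem_lowerPositions h₂ α
  · refine (ncard_freeBefore_lt hm hdown hlt ?_ (symm_val_sub_mem_lowerPositions h₁ α)).ne' hcount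
    exact hO ▸ symm_val_notMem_lowerPositions ω₂ α
end

section
/- For ω ∈ S_n finite m-stable, the function g(α,i) := #{j ∈ (i-m, i] ∩ {1,...,n} : ω(j) > α} is nondecreasing in i for each fixed α. -/
/-!
When the window `(i-m, i]` slides to `(i+1-m, i+1]`, the only position that leaves it is
`j = i+1-m`, and `m`-stability gives `ω j < ω (i+1)`. So if `j` is counted, so is the new
position `i+1`, and sending `j ↦ i+1` (all other positions fixed) injects the old window
into the new one.
-/

open Finset

/-- `(windowAbove n m ω α i).card` is the paper's `g(α, i)`. -/
def windowAbove {β : Type*} [LT β] [DecidableLT β] (n m : ℕ) (ω : ℕ → β) (α : β) (i : ℕ) :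
    Finset ℕ :=
  (Icc 1 n).filter fun j => i < j + m ∧ j ≤ i ∧ α < ω j

section

variable {β : Type*} [Preorder β] [DecidableLT β] {n m : ℕ} {ω : ℕ → β}

lemma card_windowAbove_le_succ (hst : ∀ x, 1 ≤ x → x + m ≤ n → ω x < ω (x + m))
    (α : β) {i : ℕ} (hi : i + 1 ≤ n) :
    (windowAbove n m ω α i).card ≤ (windowAbove n m ω α (i + 1)).card := by
  refine card_le_card_of_injOn (fun j => if j + m = i + 1 then i + 1 else j) ?_ ?_
  · intro j hj
    simp only [windowAbove, coe_filter, Set.mem_ofPred_eq, mem_Icc] at hj ⊢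
    obtain ⟨⟨hj1, hjn⟩, hij, hji, hαj⟩ := hj
    split_ifs with hleave
    · have hstep : ω j < ω (i + 1) := hleave ▸ hst j hj1 (by omega)
      exact ⟨⟨by omega, hi⟩, by omega, le_rfl, hαj.trans hstep⟩
    · exact ⟨⟨hj1, hjn⟩, by omega, by omega, hαj⟩
  · intro j₁ hj₁ j₂ hj₂ heq
    simp only [windowAbove, coe_filter, Set.mem_ofPred_eq, mem_Icc] at hj₁ hj₂ heq
    split_ifs at heq <;> omega

lemma monotoneOn_card_windowAbove (hst : ∀ x, 1 ≤ x → x + m ≤ n → ω x < ω (x + m))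
    (α : β) : MonotoneOn (fun i => (windowAbove n m ω α i).card) (Set.Iic n) := by
  intro i _ i' hi' hii'
  induction i', hii' using Nat.le_induction with
  | base => exact le_rfl
  | succ k _ ih =>
    have hk : k + 1 ≤ n := hi'
    exact (ih (by simp only [Set.mem_Iic]; omega)).trans (card_windowAbove_le_succ hst α hk)

end

theorem stmt_18_general (n m : ℕ) (ω : ℕ → ℕ)
    (hst : ∀ x : ℕ, 1 ≤ x → x + m ≤ n → ω x < ω (x + m)) :
    ∀ α : ℕ, 1 ≤ α → α ≤ n →
    ∀ i i' : ℕ, 1 ≤ i → i ≤ i' → i' ≤ n →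
      ((Finset.Icc 1 n).filter fun j => i < j + m ∧ j ≤ i ∧ α < ω j).card ≤
      ((Finset.Icc 1 n).filter fun j => i' < j + m ∧ j ≤ i' ∧ α < ω j).card :=
  fun α _ _ _ _ _ hii' hi'n =>
    monotoneOn_card_windowAbove hst α (hii'.trans hi'n) hi'n hii'

/-- For `ω ∈ S_n` finite `m`-stable (viewed as a bijection of `{1,…,n}`),
the function `g(α,i) = #{j ∈ (i-m, i] ∩ {1,…,n} : ω(j) > α}` is
nondecreasing in `i` for each fixed `α`. -/
theorem stmt_18 (n m : ℕ) (hm : 0 < m) (ω : ℕ → ℕ)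
    (hbij : Set.BijOn ω (Set.Icc 1 n) (Set.Icc 1 n))
    (hst : ∀ x : ℕ, 1 ≤ x → x + m ≤ n → ω x < ω (x + m)) :
    ∀ α : ℕ, 1 ≤ α → α ≤ n →
    ∀ i i' : ℕ, 1 ≤ i → i ≤ i' → i' ≤ n →
      ((Finset.Icc 1 n).filter fun j => i < j + m ∧ j ≤ i ∧ α < ω j).card ≤
      ((Finset.Icc 1 n).filter fun j => i' < j + m ∧ j ≤ i' ∧ α < ω j).card :=
  stmt_18_general n m ω hst
end

section
/- The image of the map inv² from the set of 2-stable permutations of S_n to {0,1}^n, defined by inv²_ω(α) = 1 if ω(ω^{-1}(α) - 1) > α and 0 otherwise (with the convention that the value is 0 when ω^{-1}(α) = 1), consists exactly of all binary sequences f = (f_1,...,f_n) such that for every α, at least half of the entries f_α, f_{α+1}, ..., f_n are 0. -/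
/-!
Necessity: in a 2-stable permutation the letter just before a height-one inversion bottom `β`
is larger than `β` and is not itself such a bottom (if `ω(x-1) > ω(x) > ω(x+1) = β`, then
2-stability `ω(x-1) < ω(x+1)` is violated). So `β ↦ ω(ω⁻¹ β - 1)` injects the bottoms `≥ α`
into the non-bottoms `≥ α`.

Sufficiency: build the word greedily from the smallest value `t`. If `f t = 0`, write `t`;
otherwise write `m t`, where `m` is the smallest value with `f m = 0`, which exists by the ballot
condition at `t`. The ballot condition survives removing these letters, and since all later
letters exceed `t` and all later `0`-letters exceed `m`, the word is 2-stable with inversion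
bottoms exactly the `1`s of `f`.
-/

open Finset

section

variable {α : Type*} [LinearOrder α]

def List.IsTwoStable (l : List α) : Prop :=
  ∀ i (hi : i + 2 < l.length), l[i] < l[i + 2]

theorem List.IsTwoStable.cons {a : α} {l : List α} (hl : l.IsTwoStable)
    (ha : ∀ h : 1 < l.length, a < l[1]) : (a :: l).IsTwoStable := by
  rintro (_ | i) hi
  · exact ha (by simp at hi; omega)
  · exact hl i (by simp at hi; omega)

def IsBallot (f : α → Bool) (V : Finset α) : Prop :=
  ∀ a, #{v ∈ V | a ≤ v ∧ f v = true} ≤ #{v ∈ V | a ≤ v ∧ f v = false}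

namespace IsBallot

variable {f : α → Bool} {V : Finset α}

theorem card_filter_lt_le (hV : IsBallot f V) (a : α) :
    #{v ∈ V | a < v ∧ f v = true} ≤ #{v ∈ V | a < v ∧ f v = false} := by
  rcases ({v ∈ V | a < v} : Finset α).eq_empty_or_nonempty with hS | hS
  · have : {v ∈ V | a < v ∧ f v = true} = ∅ :=
      filter_eq_empty_iff.2 fun v hv h => by simpa [hS] using mem_filter.2 ⟨hv, h.1⟩
    simp [this]
  · set b := ({v ∈ V | a < v} : Finset α).min' hS
    have hab : ∀ v ∈ V, a < v ↔ b ≤ v := fun v hv =>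
      ⟨fun h => min'_le _ _ (mem_filter.2 ⟨hv, h⟩),
        fun h => (mem_filter.1 (min'_mem _ hS)).2.trans_le h⟩
    have h : ∀ c : Bool, {v ∈ V | a < v ∧ f v = c} = {v ∈ V | b ≤ v ∧ f v = c} := fun c =>
      filter_congr fun v hv => by rw [hab v hv]
    rw [h, h]
    exact hV b

theorem erase_of_forall_le (hV : IsBallot f V) {t : α} (ht : ∀ v ∈ V, t ≤ v) :
    IsBallot f (V.erase t) := by
  intro a
  by_cases hat : a ≤ t
  · have h : ∀ c : Bool, {v ∈ V.erase t | a ≤ v ∧ f v = c} = {v ∈ V | t < v ∧ f v = c} := by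
      intro c
      ext v
      simp only [mem_filter, mem_erase]
      constructor
      · rintro ⟨⟨hvt, hv⟩, -, hc⟩
        exact ⟨hv, lt_of_le_of_ne (ht v hv) (Ne.symm hvt), hc⟩
      · rintro ⟨hv, htv, hc⟩
        exact ⟨⟨htv.ne', hv⟩, hat.trans htv.le, hc⟩
    rw [h, h]
    exact hV.card_filter_lt_le t
  · have h : ∀ c : Bool, {v ∈ V.erase t | a ≤ v ∧ f v = c} = {v ∈ V | a ≤ v ∧ f v = c} :=
      fun c => by rw [filter_erase, erase_eq_of_notMem (by simp [hat])]
    rw [h, h]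
    exact hV a

theorem exists_min_false (hV : IsBallot f V) {t : α} (htV : t ∈ V) (hft : f t = true) :
    ∃ m ∈ V, f m = false ∧ ∀ v ∈ V, f v = false → m ≤ v := by
  have hF : ({v ∈ V | f v = false} : Finset α).Nonempty := by
    have hT : 0 < #{v ∈ V | t ≤ v ∧ f v = true} := card_pos.2 ⟨t, by simp [htV, hft]⟩
    obtain ⟨m, hm⟩ := card_pos.1 (hT.trans_le (hV t))
    exact ⟨m, by simp only [mem_filter] at hm ⊢; exact ⟨hm.1, hm.2.2⟩⟩
  have hm := mem_filter.1 (min'_mem _ hF)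
  exact ⟨_, hm.1, hm.2, fun v hv hfv => min'_le _ _ (mem_filter.2 ⟨hv, hfv⟩)⟩

theorem erase_erase (hV : IsBallot f V) {t m : α} (htV : t ∈ V) (hmV : m ∈ V)
    (ht : ∀ v ∈ V, t ≤ v) (hft : f t = true) (hm : ∀ v ∈ V, f v = false → m ≤ v) :
    IsBallot f ((V.erase t).erase m) := by
  intro a
  by_cases ham : a ≤ m
  · have hT : {v ∈ (V.erase t).erase m | a ≤ v ∧ f v = true} ⊆
        {v ∈ V | t ≤ v ∧ f v = true}.erase t := by
      intro v
      simp only [mem_filter, mem_erase]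
      exact fun ⟨⟨_, hvt, hv⟩, _, hfv⟩ => ⟨hvt, hv, ht v hv, hfv⟩
    have hF : {v ∈ V | t ≤ v ∧ f v = false}.erase m ⊆
        {v ∈ (V.erase t).erase m | a ≤ v ∧ f v = false} := by
      intro v
      simp only [mem_filter, mem_erase]
      exact fun ⟨hvm, hv, _, hfv⟩ =>
        ⟨⟨hvm, fun hvt => by simp [hvt, hft] at hfv, hv⟩, ham.trans (hm v hv hfv), hfv⟩
    calc #{v ∈ (V.erase t).erase m | a ≤ v ∧ f v = true}
        ≤ #{v ∈ V | t ≤ v ∧ f v = true} - 1 :=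
          (card_le_card hT).trans_eq (card_erase_of_mem (by simp [htV, hft]))
      _ ≤ #{v ∈ V | t ≤ v ∧ f v = false} - 1 := Nat.sub_le_sub_right (hV t) 1
      _ ≤ #{v ∈ (V.erase t).erase m | a ≤ v ∧ f v = false} :=
          pred_card_le_card_erase.trans (card_le_card hF)
  · have hmt : ¬ a ≤ t := fun hat => ham (hat.trans (ht m hmV))
    have h : ∀ c : Bool, {v ∈ (V.erase t).erase m | a ≤ v ∧ f v = c} =
        {v ∈ V | a ≤ v ∧ f v = c} := fun c => by
      rw [filter_erase, filter_erase, erase_eq_of_notMem (a := t) (by simp [hmt]),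
        erase_eq_of_notMem (by simp [ham])]
    rw [h, h]
    exact hV a

end IsBallot

/-- `w` lists `V` as a 2-stable word whose height-one inversion bottoms are the `1`s of `f`.
`head_le` is the invariant that lets a `1` be preceded by the smallest `0`. -/
structure Realizes (f : α → Bool) (V : Finset α) (w : List α) : Prop where
  nodup : w.Nodup
  toFinset_eq : w.toFinset = V
  isTwoStable : w.IsTwoStable
  isChain : w.IsChain fun a b => f b = decide (b < a)
  head_false : ∀ a ∈ w.head?, f a = false
  head_le : ∀ a ∈ w.head?, ∀ v ∈ V, f v = false → a ≤ v

namespace Realizes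

variable {f : α → Bool} {V : Finset α} {w : List α}

theorem nil : Realizes f ∅ [] :=
  ⟨List.nodup_nil, rfl, fun _ hi => by simp at hi, List.IsChain.nil, by simp, by simp⟩

theorem mem_iff (hw : Realizes f V w) {v : α} : v ∈ w ↔ v ∈ V := by
  rw [← List.mem_toFinset, hw.toFinset_eq]

theorem cons_min {t : α} (hw : Realizes f (V.erase t) w) (htV : t ∈ V) (ht : ∀ v ∈ V, t ≤ v)
    (hft : f t = false) : Realizes f V (t :: w) := by
  have hlt : ∀ v ∈ w, t < v := fun v hv => by
    obtain ⟨hvt, hv⟩ := mem_erase.1 (hw.mem_iff.1 hv)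
    exact lt_of_le_of_ne (ht v hv) (Ne.symm hvt)
  refine ⟨List.nodup_cons.2 ⟨fun h => lt_irrefl t (hlt t h), hw.nodup⟩, ?_, ?_, ?_, ?_, ?_⟩
  · rw [List.toFinset_cons, hw.toFinset_eq, insert_erase htV]
  · exact hw.isTwoStable.cons fun h => hlt _ (List.getElem_mem h)
  · refine hw.isChain.cons fun b hb => ?_
    simp [hw.head_false b hb, (hlt b (List.mem_of_mem_head? hb)).not_gt]
  · simpa using hft
  · simpa using fun v hv _ => ht v hv

theorem cons_cons {t m : α} (hw : Realizes f ((V.erase t).erase m) w) (htV : t ∈ V)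
    (hmV : m ∈ V) (ht : ∀ v ∈ V, t ≤ v) (hft : f t = true) (hfm : f m = false)
    (hm : ∀ v ∈ V, f v = false → m ≤ v) : Realizes f V (m :: t :: w) := by
  have hmem : ∀ v ∈ w, v ∈ V ∧ v ≠ t ∧ v ≠ m := fun v hv => by
    obtain ⟨hvm, hv'⟩ := mem_erase.1 (hw.mem_iff.1 hv)
    exact ⟨(mem_erase.1 hv').2, (mem_erase.1 hv').1, hvm⟩
  have htw : ∀ v ∈ w, t < v := fun v hv =>
    lt_of_le_of_ne (ht v (hmem v hv).1) (hmem v hv).2.1.symm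
  have htm : t < m := lt_of_le_of_ne (ht m hmV) (by rintro rfl; simp [hft] at hfm)
  refine ⟨?_, ?_, ?_, ?_, by simpa using hfm, by simpa using hm⟩
  · simp only [List.nodup_cons, List.mem_cons, not_or]
    exact ⟨⟨htm.ne', fun h => (hmem m h).2.2 rfl⟩, fun h => (hmem t h).2.1 rfl, hw.nodup⟩
  · rw [List.toFinset_cons, List.toFinset_cons, hw.toFinset_eq, erase_right_comm,
      insert_erase (mem_erase.2 ⟨htm.ne, htV⟩), insert_erase hmV]
  · refine (hw.isTwoStable.cons fun h => htw _ (List.getElem_mem h)).cons fun h => ?_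
    obtain ⟨b, w', rfl⟩ := List.exists_cons_of_length_pos (Nat.lt_of_succ_lt_succ h)
    obtain ⟨hbV, -, hbm⟩ := hmem b List.mem_cons_self
    exact lt_of_le_of_ne (hm b hbV (hw.head_false b rfl)) hbm.symm
  · refine (hw.isChain.cons fun b hb => ?_).cons_cons (by simp [hft, htm])
    simp [hw.head_false b hb, (htw b (List.mem_of_mem_head? hb)).not_gt]

end Realizes

theorem IsBallot.exists_realizes {f : α → Bool} {V : Finset α} (hV : IsBallot f V) :
    ∃ w, Realizes f V w := by
  induction V using Finset.strongInduction with
  | H V ih =>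
  rcases V.eq_empty_or_nonempty with rfl | hne
  · exact ⟨[], Realizes.nil⟩
  have htV := V.min'_mem hne
  have ht : ∀ v ∈ V, V.min' hne ≤ v := fun v hv => V.min'_le v hv
  cases hft : f (V.min' hne)
  · obtain ⟨w, hw⟩ := ih _ (erase_ssubset htV) (hV.erase_of_forall_le ht)
    exact ⟨_, hw.cons_min htV ht hft⟩
  · obtain ⟨m, hmV, hfm, hm⟩ := hV.exists_min_false htV hft
    have hmt : m ∈ V.erase (V.min' hne) := mem_erase.2 ⟨by rintro rfl; simp [hft] at hfm, hmV⟩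
    obtain ⟨w, hw⟩ := ih _ ((erase_ssubset hmt).trans (erase_ssubset htV))
      (hV.erase_erase htV hmV ht hft hm)
    exact ⟨_, hw.cons_cons htV hmV ht hft hfm hm⟩

end

namespace Equiv.Perm

variable {n : ℕ}

def IsTwoStable (ω : Equiv.Perm (Fin n)) : Prop :=
  ∀ x y : Fin n, (y : ℕ) = (x : ℕ) + 2 → ω x < ω y

/-- The paper's `inv²_ω(α) = 1`. -/
def IsInvBottom (ω : Equiv.Perm (Fin n)) (α : Fin n) : Prop :=
  ∃ x y : Fin n, (x : ℕ) + 1 = (y : ℕ) ∧ ω y = α ∧ α < ω x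

namespace IsTwoStable

variable {ω : Equiv.Perm (Fin n)}

theorem not_isInvBottom_of_lt (hω : ω.IsTwoStable) {x y : Fin n} (hxy : (x : ℕ) + 1 = y)
    (hlt : ω y < ω x) : ¬ ω.IsInvBottom (ω x) := by
  rintro ⟨x', y', hxy', hy', hlt'⟩
  obtain rfl := ω.injective hy'
  exact lt_asymm ((hω x' y (by omega)).trans hlt) hlt'

theorem ncard_isInvBottom_le (hω : ω.IsTwoStable) (α : Fin n) :
    {β | α ≤ β ∧ ω.IsInvBottom β}.ncard ≤ {β | α ≤ β ∧ ¬ ω.IsInvBottom β}.ncard := by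
  let g (β : Fin n) : Fin n := ω ⟨ω.symm β - 1, by omega⟩
  have hg {x y : Fin n} (hxy : (x : ℕ) + 1 = y) : g (ω y) = ω x := by
    simp only [g, symm_apply_apply]
    congr
    omega
  refine Set.ncard_le_ncard_of_injOn g ?_ ?_ (Set.toFinite _)
  · rintro _ ⟨hαβ, x, y, hxy, rfl, hlt⟩
    rw [hg hxy]
    exact ⟨hαβ.trans hlt.le, hω.not_isInvBottom_of_lt hxy hlt⟩
  · rintro _ ⟨-, x₁, y₁, h₁, rfl, -⟩ _ ⟨-, x₂, y₂, h₂, rfl, -⟩ heq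
    rw [hg h₁, hg h₂] at heq
    obtain rfl := ω.injective heq
    rw [Fin.ext (h₁.symm.trans h₂)]

end IsTwoStable

theorem eq_true_iff_isInvBottom {ω : Equiv.Perm (Fin n)} {f : Fin n → Bool}
    (hchain : ∀ x y : Fin n, (x : ℕ) + 1 = y → f (ω y) = decide (ω y < ω x))
    (hhead : ∀ y : Fin n, (y : ℕ) = 0 → f (ω y) = false) (α : Fin n) :
    f α = true ↔ ω.IsInvBottom α := by
  constructor
  · intro hα
    obtain ⟨i, hi⟩ : ∃ i, (ω.symm α : ℕ) = i + 1 :=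
      Nat.exists_eq_succ_of_ne_zero fun h0 => by simpa [hα] using hhead _ h0
    refine ⟨⟨i, by omega⟩, ω.symm α, hi.symm, ω.apply_symm_apply α, ?_⟩
    simpa [hα] using (hchain ⟨i, by omega⟩ _ hi.symm).symm
  · rintro ⟨x, y, hxy, rfl, hlt⟩
    simpa [hlt] using hchain x y hxy

end Equiv.Perm

theorem Realizes.exists_perm {n : ℕ} {f : Fin n → Bool} {w : List (Fin n)}
    (hw : Realizes f univ w) :
    ∃ ω : Equiv.Perm (Fin n), ω.IsTwoStable ∧ ∀ α, f α = true ↔ ω.IsInvBottom α := by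
  have hlen : w.length = n := by
    simpa [hw.toFinset_eq] using (List.toFinset_card_of_nodup hw.nodup).symm
  let ω := (finCongr hlen.symm).trans (hw.nodup.getEquivOfForallMemList w fun x => by
    simp [hw.mem_iff])
  have hω (i : Fin n) : ω i = w[(i : ℕ)] := rfl
  refine ⟨ω, ?_, Equiv.Perm.eq_true_iff_isInvBottom ?_ ?_⟩
  · rintro x ⟨y, hy⟩ rfl
    simpa [hω] using hw.isTwoStable x (by omega)
  · rintro x ⟨y, hy⟩ rfl
    simpa [hω] using List.isChain_iff_getElem.1 hw.isChain x (by omega)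
  · rintro ⟨y, hy⟩ (rfl : y = 0)
    simpa [hω] using hw.head_false _ (by simp [List.head?_eq_getElem?])

theorem isBallot_univ_iff {α : Type*} [LinearOrder α] [Fintype α] (f : α → Bool) :
    IsBallot f univ ↔ ∀ a, {β | a ≤ β ∧ f β = true}.ncard ≤ {β | a ≤ β ∧ f β = false}.ncard := by
  simp [IsBallot, Set.ncard_eq_toFinset_card']

/-- The image of the map `inv²` from `2`-stable permutations of `S_n` to binary
sequences, where `inv²_ω(α) = 1` iff the position of `α` has a predecessor
carrying a larger value, consists exactly of the binary sequences `f` such that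
for every `α`, at least half of `f_α, …, f_n` are `0`. -/
theorem stmt_19 (n : ℕ) (f : Fin n → Bool) :
    (∃ ω : Equiv.Perm (Fin n),
      (∀ x y : Fin n, (y : ℕ) = (x : ℕ) + 2 → ω x < ω y) ∧
      (∀ α : Fin n, f α = true ↔
        ∃ x y : Fin n, (x : ℕ) + 1 = (y : ℕ) ∧ ω y = α ∧ α < ω x)) ↔
    (∀ α : Fin n,
      {β : Fin n | α ≤ β ∧ f β = true}.ncard ≤
      {β : Fin n | α ≤ β ∧ f β = false}.ncard) := by
  constructor
  · rintro ⟨ω, hω, hf⟩ α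
    have hf_true : ∀ β, f β = true ↔ ω.IsInvBottom β := hf
    have hf_false : ∀ β, f β = false ↔ ¬ ω.IsInvBottom β := fun β => by simp [← hf_true]
    simpa only [hf_true, hf_false] using Equiv.Perm.IsTwoStable.ncard_isInvBottom_le hω α
  · intro hf
    obtain ⟨w, hw⟩ := ((isBallot_univ_iff f).2 hf).exists_realizes
    exact hw.exists_perm
end
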